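/- arXiv:2304.04690 — 3 statements merged into one kernel-verified Lean document; each statement's English description precedes it below -/
import Mathlib

section
/- For every k ≥ 1 and every digraph D, if D has a dicut (X1, X2) of size at most k − 1 and both induced subdigraphs D[X1] and D[X2] admit k-dicolourings, then D admits a k-dicolouring. -/
/-!
Common framework: finite digraphs on vertex set a `Finset ℕ`,
loopless and without parallel arcs (arcs are a `Finset (ℕ × ℕ)`).
-/

structure Dgraph where
  verts : Finset ℕ
  arcs : Finset (ℕ × ℕ)

namespace Dgraph

/-- Well-formedness: every arc joins two distinct vertices of the digraph
(no loops, arcs within the vertex set). -/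
def WF (D : Dgraph) : Prop :=
  ∀ a ∈ D.arcs, a.1 ∈ D.verts ∧ a.2 ∈ D.verts ∧ a.1 ≠ a.2

/-- `p` is a directed path from `u` to `v` in `D` (vertices pairwise distinct,
consecutive pairs are arcs). -/
def IsDipath (D : Dgraph) (p : List ℕ) (u v : ℕ) : Prop :=
  p.Nodup ∧ p.head? = some u ∧ p.getLast? = some v ∧
    (∀ x ∈ p, x ∈ D.verts) ∧ p.Chain' (fun a b => (a, b) ∈ D.arcs)

/-- The set of arcs used by a path (consecutive pairs). -/
def arcsOf (p : List ℕ) : Finset (ℕ × ℕ) := (p.zip p.tail).toFinset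

/-- Local arc-connectivity `λ(u,v)`: the maximum number of pairwise
arc-disjoint directed paths from `u` to `v`. -/
noncomputable def locLam (D : Dgraph) (u v : ℕ) : ℕ :=
  sSup {n | ∃ P : Fin n → List ℕ, (∀ i, D.IsDipath (P i) u v) ∧
    Pairwise fun i j => Disjoint (arcsOf (P i)) (arcsOf (P j))}

/-- Maximum local arc-connectivity `λ(D)`. -/
noncomputable def lam (D : Dgraph) : ℕ :=
  sSup {n | ∃ u ∈ D.verts, ∃ v ∈ D.verts, u ≠ v ∧ n = D.locLam u v}

/-- `p` is a directed cycle of `D` (cyclically consecutive pairs are arcs,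
vertices pairwise distinct). -/
def IsDicycle (D : Dgraph) (p : List ℕ) : Prop :=
  2 ≤ p.length ∧ p.Nodup ∧ (∀ x ∈ p, x ∈ D.verts) ∧
    p.Chain' (fun a b => (a, b) ∈ D.arcs) ∧
    ∀ x y, p.getLast? = some x → p.head? = some y → (x, y) ∈ D.arcs

/-- A colouring `φ` of the vertices with `k` colours is a `k`-dicolouring if
no directed cycle is monochromatic, i.e. every colour class induces an
acyclic subdigraph. -/
def IsDicolouring (D : Dgraph) (k : ℕ) (φ : ℕ → Fin k) : Prop :=
  ∀ p, D.IsDicycle p → ¬∃ c, ∀ x ∈ p, φ x = c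

/-- The dichromatic number: least `k` admitting a `k`-dicolouring. -/
noncomputable def dichi (D : Dgraph) : ℕ :=
  sInf {k | ∃ φ : ℕ → Fin k, D.IsDicolouring k φ}

/-- A monochromatic list of vertices. -/
def Mono {k : ℕ} (φ : ℕ → Fin k) (p : List ℕ) : Prop := ∃ c, ∀ x ∈ p, φ x = c

/-- `D` is strong: any vertex can reach any other by a directed path. -/
def Strong (D : Dgraph) : Prop :=
  ∀ u ∈ D.verts, ∀ v ∈ D.verts, u ≠ v → ∃ p, D.IsDipath p u v

/-- Induced subdigraph on `S`. -/
def induce (D : Dgraph) (S : Finset ℕ) : Dgraph where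
  verts := D.verts ∩ S
  arcs := D.arcs.filter fun a => a.1 ∈ S ∧ a.2 ∈ S

/-- Adjacency in the underlying undirected graph. -/
def adj (D : Dgraph) (x y : ℕ) : Prop := (x, y) ∈ D.arcs ∨ (y, x) ∈ D.arcs

/-- Reachability in the underlying undirected graph. -/
def UReach (D : Dgraph) (x y : ℕ) : Prop := Relation.ReflTransGen D.adj x y

/-- Connectivity of the underlying undirected graph. -/
def UConnected (D : Dgraph) : Prop :=
  D.verts.Nonempty ∧ ∀ u ∈ D.verts, ∀ v ∈ D.verts, D.UReach u v

/-- Deletion of a vertex. -/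
def delVert (D : Dgraph) (v : ℕ) : Dgraph := D.induce (D.verts.erase v)

/-- `v` is a cutvertex: its removal disconnects the underlying graph. -/
def IsCutvertex (D : Dgraph) (v : ℕ) : Prop :=
  v ∈ D.verts ∧ ¬(D.delVert v).UConnected

/-- Biconnected: the underlying graph is connected and has no cutvertex. -/
def Biconnected (D : Dgraph) : Prop :=
  D.UConnected ∧ ∀ v, ¬D.IsCutvertex v

/-- `D` is `k`-extremal: biconnected, strong and `χ⃗(D) = λ(D) + 1 = k + 1`. -/
def Extremal (k : ℕ) (D : Dgraph) : Prop :=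
  D.Biconnected ∧ D.Strong ∧ D.dichi = k + 1 ∧ D.lam = k

/-- The arcs of the dicut `(X, X̄)`: arcs from `X` to its complement. -/
def dicutArcs (D : Dgraph) (X : Finset ℕ) : Finset (ℕ × ℕ) :=
  D.arcs.filter fun a => a.1 ∈ X ∧ a.2 ∉ X

/-- `X` is the side of a dicut: `∅ ≠ X ⊊ V(D)`. -/
def IsDicutSide (D : Dgraph) (X : Finset ℕ) : Prop :=
  X ⊆ D.verts ∧ X.Nonempty ∧ X ≠ D.verts

/-- `(X, X̄)` is a minimum dicut of `D`. -/
def IsMinDicut (D : Dgraph) (X : Finset ℕ) : Prop :=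
  D.IsDicutSide X ∧ ∀ Y, D.IsDicutSide Y → (D.dicutArcs X).card ≤ (D.dicutArcs Y).card

def outdeg (D : Dgraph) (v : ℕ) : ℕ := (D.arcs.filter fun a => a.1 = v).card
def indeg (D : Dgraph) (v : ℕ) : ℕ := (D.arcs.filter fun a => a.2 = v).card

/-- Eulerian: every vertex has equal in- and out-degree. -/
def Eulerian (D : Dgraph) : Prop := ∀ v ∈ D.verts, D.outdeg v = D.indeg v

/-- Deleting a set of arcs. -/
def delArcs (D : Dgraph) (s : Finset (ℕ × ℕ)) : Dgraph := ⟨D.verts, D.arcs \ s⟩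

/-- Adding an arc. -/
def addArc (D : Dgraph) (u v : ℕ) : Dgraph :=
  ⟨insert u (insert v D.verts), insert (u, v) D.arcs⟩

/-- `D` is `m`-dicritical: `χ⃗(D) = m` and deleting any arc drops the
dichromatic number to at most `m - 1`. -/
def Dicritical (m : ℕ) (D : Dgraph) : Prop :=
  D.dichi = m ∧ ∀ a ∈ D.arcs, (D.delArcs {a}).dichi ≤ m - 1

/-- Renaming a vertex `x` to `y`. -/
def ren (x y z : ℕ) : ℕ := if z = x then y else z

def renArc (x y : ℕ) (a : ℕ × ℕ) : ℕ × ℕ := (ren x y a.1, ren x y a.2)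

/-- Cyclically consecutive pairs of a list: the arcs of the directed cycle
through `p` in this cyclic order. -/
def cycArcs (p : List ℕ) : Finset (ℕ × ℕ) := (p.zip (p.rotate 1)).toFinset

/-- `D` is a directed cycle. -/
def IsDirectedCycleGraph (D : Dgraph) : Prop :=
  ∃ p : List ℕ, 2 ≤ p.length ∧ p.Nodup ∧ D.verts = p.toFinset ∧ D.arcs = cycArcs p

/-- `D` is the bidirected complete digraph `↔K_n`. -/
def IsBiComplete (D : Dgraph) (n : ℕ) : Prop :=
  D.verts.card = n ∧ D.arcs = (D.verts ×ˢ D.verts).filter fun a => a.1 ≠ a.2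

/-- Arcs of a bidirected (symmetric) cycle through `p`. -/
def symmCyc (p : List ℕ) : Finset (ℕ × ℕ) := cycArcs p ∪ (cycArcs p).image Prod.swap

/-- `D` is a symmetric odd wheel: a bidirected odd cycle (≥ 3 vertices)
plus a hub joined by digons to all cycle vertices. -/
def IsSymOddWheel (D : Dgraph) : Prop :=
  ∃ (p : List ℕ) (x : ℕ), 3 ≤ p.length ∧ Odd p.length ∧ p.Nodup ∧ x ∉ p ∧
    D.verts = insert x p.toFinset ∧
    D.arcs = symmCyc p ∪ p.toFinset.image (fun y => (x, y)) ∪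
      p.toFinset.image (fun y => (y, x))

/-- A fresh vertex not in `D`. -/
def fresh (D : Dgraph) : ℕ := (D.verts.sup id) + 1

/-- Contraction `D/X`: `X` is contracted into a single new vertex; arcs
inside `X` are deleted and parallel arcs created by contraction are
identified. -/
def contract (D : Dgraph) (X : Finset ℕ) : Dgraph where
  verts := insert (fresh D) (D.verts \ X)
  arcs := (D.arcs.image fun a =>
      (if a.1 ∈ X then fresh D else a.1, if a.2 ∈ X then fresh D else a.2)).filter
      fun a => a.1 ≠ a.2

/-- `D` is the directed Hajós join of `D1` and `D2` with respect to the arcs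
`(u,v1) ∈ A(D1)` and `(v2,w) ∈ A(D2)`, the vertices `v1, v2` being
identified into the new vertex `v`, and the arc `(u,w)` being added. -/
def IsDirHajosJoinAt (D D1 D2 : Dgraph) (u v1 v2 w v : ℕ) : Prop :=
  D1.WF ∧ D2.WF ∧ Disjoint D1.verts D2.verts ∧
  (u, v1) ∈ D1.arcs ∧ (v2, w) ∈ D2.arcs ∧
  v ∉ (D1.verts.erase v1) ∪ (D2.verts.erase v2) ∧
  D.verts = insert v ((D1.verts.erase v1) ∪ (D2.verts.erase v2)) ∧
  D.arcs = insert (u, w)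
    (((D1.arcs.erase (u, v1)) ∪ (D2.arcs.erase (v2, w))).image
      fun a => renArc v2 v (renArc v1 v a))

def IsDirHajosJoin (D D1 D2 : Dgraph) : Prop :=
  ∃ u v1 v2 w v, IsDirHajosJoinAt D D1 D2 u v1 v2 w v

/-- Bidirected Hajós join with respect to the digons `[u,v1] ⊆ A(D1)` and
`[w,v2] ⊆ A(D2)`. -/
def IsBidirHajosJoinAt (D D1 D2 : Dgraph) (u v1 v2 w v : ℕ) : Prop :=
  D1.WF ∧ D2.WF ∧ Disjoint D1.verts D2.verts ∧
  (u, v1) ∈ D1.arcs ∧ (v1, u) ∈ D1.arcs ∧ (w, v2) ∈ D2.arcs ∧ (v2, w) ∈ D2.arcs ∧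
  v ∉ (D1.verts.erase v1) ∪ (D2.verts.erase v2) ∧
  D.verts = insert v ((D1.verts.erase v1) ∪ (D2.verts.erase v2)) ∧
  D.arcs = insert (u, w) (insert (w, u)
    (((D1.arcs \ {(u, v1), (v1, u)}) ∪ (D2.arcs \ {(w, v2), (v2, w)})).image
      fun a => renArc v2 v (renArc v1 v a)))

def IsBidirHajosJoin (D D1 D2 : Dgraph) : Prop :=
  ∃ u v1 v2 w v, IsBidirHajosJoinAt D D1 D2 u v1 v2 w v

/-- Hajós bijoin of `D1` and `D2` with respect to `((t,a1,w),(v,a2,u))`: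
`ta1, a1w ∈ A(D1)` with `t,w` in the same connected component of `D1 ∖ a1`,
`va2, a2u ∈ A(D2)` with `u,v` in the same connected component of `D2 ∖ a2`;
`a1` and `a2` are identified into the new vertex `a` and the arcs
`tu` and `vw` are added. -/
def IsHajosBijoinAt (D D1 D2 : Dgraph) (t a1 w v a2 u a : ℕ) : Prop :=
  D1.WF ∧ D2.WF ∧ Disjoint D1.verts D2.verts ∧
  (t, a1) ∈ D1.arcs ∧ (a1, w) ∈ D1.arcs ∧
  (v, a2) ∈ D2.arcs ∧ (a2, u) ∈ D2.arcs ∧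
  (D1.delVert a1).UReach t w ∧
  (D2.delVert a2).UReach u v ∧
  a ∉ (D1.verts.erase a1) ∪ (D2.verts.erase a2) ∧
  D.verts = insert a ((D1.verts.erase a1) ∪ (D2.verts.erase a2)) ∧
  D.arcs = insert (t, u) (insert (v, w)
    (((D1.arcs \ {(t, a1), (a1, w)}) ∪ (D2.arcs \ {(v, a2), (a2, u)})).image
      fun x => renArc a2 a (renArc a1 a x)))

def IsHajosBijoin (D D1 D2 : Dgraph) : Prop :=
  ∃ t a1 w v a2 u a, IsHajosBijoinAt D D1 D2 t a1 w v a2 u a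

/-! ### Trees, Euler tours and Hajós tree joins -/

/-- Vertex set of the tree given by edges `e : Fin n → ℕ × ℕ`. -/
def treeVerts (n : ℕ) (e : Fin n → ℕ × ℕ) : Finset ℕ :=
  Finset.univ.image (fun i => (e i).1) ∪ Finset.univ.image (fun i => (e i).2)

/-- The bidirected digraph `↔T` of the tree. -/
def treeDigraph (n : ℕ) (e : Fin n → ℕ × ℕ) : Dgraph where
  verts := treeVerts n e
  arcs := Finset.univ.image (fun i : Fin n => e i) ∪
    Finset.univ.image (fun i : Fin n => (e i).swap)

/-- `e` lists the edges of a tree: loopless, pairwise distinct edges,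
connected, with `n + 1` vertices for `n` edges. -/
def IsTree (n : ℕ) (e : Fin n → ℕ × ℕ) : Prop :=
  (∀ i, (e i).1 ≠ (e i).2) ∧
  (∀ i j, i ≠ j → e i ≠ e j ∧ e i ≠ (e j).swap) ∧
  (treeDigraph n e).UConnected ∧
  (treeVerts n e).card = n + 1

/-- The leaves of the tree: vertices incident to exactly one edge. -/
def leafSet (n : ℕ) (e : Fin n → ℕ × ℕ) : Finset ℕ :=
  (treeVerts n e).filter fun x =>
    (Finset.univ.filter fun i : Fin n => (e i).1 = x ∨ (e i).2 = x).card = 1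

/-- `L` is an Eulerian list of the tree: the cyclic sequence of consecutive
pairs of `L` traverses each arc of `↔T` exactly once. -/
def IsEulerTour (n : ℕ) (e : Fin n → ℕ × ℕ) (L : List ℕ) : Prop :=
  ((L.zip (L.rotate 1) : List (ℕ × ℕ)) : Multiset (ℕ × ℕ)) = (treeDigraph n e).arcs.val

/-- `C` is a partial Eulerian list: a circular sublist of an Eulerian list
containing every leaf, in which every non-leaf vertex appears at most once. -/
def IsPartialEulerList (n : ℕ) (e : Fin n → ℕ × ℕ) (C : List ℕ) : Prop :=
  ∃ L m, IsEulerTour n e L ∧ List.Sublist C (L.rotate m) ∧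
    (∀ x ∈ leafSet n e, x ∈ C) ∧
    ∀ x ∈ C, x ∉ leafSet n e → C.count x ≤ 1

/-- Compatibility of the data of a (extended) Hajós tree join:
a tree with edges `uᵢvᵢ = e i`, digraphs `Ds i` with
`V(Ds i) ∩ V(T) = {uᵢ, vᵢ}`, `[uᵢ,vᵢ] ⊆ A(Ds i)` and whose remaining
vertex sets are pairwise disjoint. -/
def JoinCompat (n : ℕ) (e : Fin n → ℕ × ℕ) (Ds : Fin n → Dgraph) : Prop :=
  IsTree n e ∧ (∀ i, (Ds i).WF) ∧
  (∀ i, (Ds i).verts ∩ treeVerts n e = {(e i).1, (e i).2}) ∧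
  (∀ i, e i ∈ (Ds i).arcs ∧ (e i).swap ∈ (Ds i).arcs) ∧
  (∀ i j, i ≠ j →
    Disjoint ((Ds i).verts \ {(e i).1, (e i).2}) ((Ds j).verts \ {(e j).1, (e j).2}))

/-- The digraph obtained from the digraphs `Ds i − [uᵢ,vᵢ]` by adding the
directed cycle through the list `C`. -/
def joinOf (n : ℕ) (e : Fin n → ℕ × ℕ) (Ds : Fin n → Dgraph) (C : List ℕ) : Dgraph where
  verts := Finset.univ.biUnion fun i => (Ds i).verts
  arcs := (Finset.univ.biUnion fun i => (Ds i).arcs \ {e i, (e i).swap}) ∪ cycArcs C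

/-- `D` is the Hajós tree join `T(D₁, …, Dₙ; C)`: the peripheral cycle runs
through the leaves of `T` in the circular order given by a plane embedding
of `T` (equivalently, the order of the leaves along an Euler tour of `↔T`). -/
def IsHajosTreeJoin (D : Dgraph) (n : ℕ) (e : Fin n → ℕ × ℕ)
    (Ds : Fin n → Dgraph) : Prop :=
  JoinCompat n e Ds ∧ ∃ L, IsEulerTour n e L ∧
    D = joinOf n e Ds (L.filter fun x => decide (x ∈ leafSet n e))

/-- `D` is an extended Hajós tree join: the peripheral cycle runs through a
partial Eulerian list of `T`. -/
def IsExtHajosTreeJoin (D : Dgraph) (n : ℕ) (e : Fin n → ℕ × ℕ)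
    (Ds : Fin n → Dgraph) : Prop :=
  JoinCompat n e Ds ∧ ∃ C, IsPartialEulerList n e C ∧ D = joinOf n e Ds C

/-- Hajós star join: a Hajós tree join whose tree is a star. -/
def IsHajosStarJoin (D : Dgraph) (n : ℕ) (e : Fin n → ℕ × ℕ)
    (Ds : Fin n → Dgraph) : Prop :=
  IsHajosTreeJoin D n e Ds ∧ ∃ c, ∀ i, (e i).1 = c ∨ (e i).2 = c

/-- The class `H⃗_k`: for `k = 3` the smallest class containing the symmetric
odd wheels and closed under directed Hajós joins and Hajós tree joins; for
`k ≥ 4` the smallest class containing `↔K_{k+1}` and closed under directed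
Hajós joins and Hajós tree joins. -/
inductive HClass (k : ℕ) : Dgraph → Prop
  | wheel (D : Dgraph) (hk : k = 3) (h : IsSymOddWheel D) : HClass k D
  | complete (D : Dgraph) (hk : 4 ≤ k) (h : IsBiComplete D (k + 1)) : HClass k D
  | dirJoin (D D1 D2 : Dgraph) (h1 : HClass k D1) (h2 : HClass k D2)
      (h : IsDirHajosJoin D D1 D2) : HClass k D
  | treeJoin (D : Dgraph) (n : ℕ) (e : Fin n → ℕ × ℕ) (Ds : Fin n → Dgraph)
      (h : ∀ i, HClass k (Ds i)) (hj : IsHajosTreeJoin D n e Ds) : HClass k D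

/-- The class `EH⃗T_k`: for `k = 3` the smallest class containing the
symmetric odd wheels and closed under extended Hajós tree joins; for `k ≥ 4`
the smallest class containing `↔K_{k+1}` and closed under extended Hajós
tree joins. -/
inductive EHTClass (k : ℕ) : Dgraph → Prop
  | wheel (D : Dgraph) (hk : k = 3) (h : IsSymOddWheel D) : EHTClass k D
  | complete (D : Dgraph) (hk : 4 ≤ k) (h : IsBiComplete D (k + 1)) : EHTClass k D
  | extJoin (D : Dgraph) (n : ℕ) (e : Fin n → ℕ × ℕ) (Ds : Fin n → Dgraph)
      (h : ∀ i, EHTClass k (Ds i)) (hj : IsExtHajosTreeJoin D n e Ds) : EHTClass k D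

/-- Parallel Hajós join of `D_AC` and `D_B` with respect to
`(t, u, v, w, [a,b])`. -/
def IsParallelHajosJoinAt (D DAC DB : Dgraph) (A C : Finset ℕ)
    (x t u v w a b : ℕ) : Prop :=
  DAC.WF ∧ DB.WF ∧
  (a, b) ∈ DB.arcs ∧ (b, a) ∈ DB.arcs ∧
  DAC.verts = A ∪ C ∧ A ∩ C = {x} ∧
  t ∈ A.erase x ∧ w ∈ A.erase x ∧ u ∈ C.erase x ∧ v ∈ C.erase x ∧
  (t, u) ∈ DAC.arcs ∧ (v, w) ∈ DAC.arcs ∧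
  (DAC.delVert x).UReach t w ∧
  ((DAC.induce C).delVert x).UReach u v ∧
  Disjoint DAC.verts DB.verts ∧
  D.verts = DB.verts ∪ (A.erase x) ∪ (C.erase x) ∧
  D.arcs = insert (t, u) (insert (v, w)
    ((DB.arcs \ {(a, b), (b, a)}) ∪
      ((DAC.induce A).arcs.image (renArc x a)) ∪
      ((DAC.induce C).arcs.image (renArc x b))))

def IsParallelHajosJoin (D DAC DB : Dgraph) : Prop :=
  ∃ A C x t u v w a b, IsParallelHajosJoinAt D DAC DB A C x t u v w a b

/-- `S` is (the vertex set of) a strong component of `D`. -/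
def IsStrongComponent (D : Dgraph) (S : Finset ℕ) : Prop :=
  S ⊆ D.verts ∧ S.Nonempty ∧ (D.induce S).Strong ∧
  ∀ S', S ⊆ S' → S' ⊆ D.verts → (D.induce S').Strong → S' = S

/-- `B` is (the vertex set of) a block of `D`: a maximal set inducing a
biconnected subdigraph. -/
def IsBlock (D : Dgraph) (B : Finset ℕ) : Prop :=
  B ⊆ D.verts ∧ (D.induce B).Biconnected ∧
  ∀ B', B ⊆ B' → B' ⊆ D.verts → (D.induce B').Biconnected → B' = B

end Dgraph

open Dgraph

open Dgraph

lemma my_head?_eq {l : List ℕ} (h : 0 < l.length) : l.head? = some (l.get ⟨0, h⟩) := by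
  cases l with
  | nil => simp at h
  | cons a t => simp

lemma my_getLast?_eq {l : List ℕ} (h : 0 < l.length) :
    l.getLast? = some (l.get ⟨l.length - 1, by omega⟩) := by
  have hne : l ≠ [] := by intro hl; simp [hl] at h
  rw [List.getLast?_eq_getLast hne, List.getLast_eq_getElem]
  rfl

lemma my_cycle_induce (D : Dgraph) (S : Finset ℕ) (p : List ℕ) (hp : D.IsDicycle p)
    (hS : ∀ x ∈ p, x ∈ S) : (D.induce S).IsDicycle p := by
  obtain ⟨h2, hnd, hv, hc, hw⟩ := hp
  refine ⟨h2, hnd, ?_, ?_, ?_⟩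
  · intro x hx
    simp only [Dgraph.induce, Finset.mem_inter]
    exact ⟨hv x hx, hS x hx⟩
  · simp only [List.Chain', List.isChain_iff_getElem] at hc ⊢
    intro i h
    have harc := hc i h
    simp only [Dgraph.induce, Finset.mem_filter]
    exact ⟨harc, hS _ (List.getElem_mem ..), hS _ (List.getElem_mem ..)⟩
  · intro x y hx hy
    have hxm : x ∈ p := List.mem_of_getLast? hx
    have hym : y ∈ p := List.mem_of_mem_head? (by rw [hy]; simp)
    simp only [Dgraph.induce, Finset.mem_filter]
    exact ⟨hw x y hx hy, hS x hxm, hS y hym⟩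

/-- For every k ≥ 1 and every digraph D, if D has a dicut
(X1, X2) of size at most k − 1 and both induced subdigraphs D[X1] and D[X2]
admit k-dicolourings, then D admits a k-dicolouring. -/
theorem statement_0 (k : ℕ) (hk : 1 ≤ k) (D : Dgraph) (hWF : D.WF)
    (X1 : Finset ℕ) (hsub : X1 ⊆ D.verts) (hne : X1.Nonempty) (hproper : X1 ≠ D.verts)
    (hsize : (D.dicutArcs X1).card ≤ k - 1)
    (h1 : ∃ φ : ℕ → Fin k, (D.induce X1).IsDicolouring k φ)
    (h2 : ∃ φ : ℕ → Fin k, (D.induce (D.verts \ X1)).IsDicolouring k φ) :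
    ∃ φ : ℕ → Fin k, D.IsDicolouring k φ := by
  obtain ⟨φ1, hφ1⟩ := h1
  obtain ⟨φ2, hφ2⟩ := h2
  haveI : NeZero k := ⟨by omega⟩
  set S : Finset (Fin k) := (D.dicutArcs X1).image (fun a => φ1 a.1 - φ2 a.2) with hSdef
  obtain ⟨s, hs⟩ : ∃ s : Fin k, s ∉ S := by
    by_contra hcon
    push_neg at hcon
    have hsubS : (Finset.univ : Finset (Fin k)) ⊆ S := fun x _ => hcon x
    have h1' := Finset.card_le_card hsubS
    have h2' := Finset.card_image_le (s := D.dicutArcs X1) (f := fun a => φ1 a.1 - φ2 a.2)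
    simp only [Finset.card_univ, Fintype.card_fin] at h1'
    rw [hSdef] at h1'
    omega
  have hgood : ∀ a ∈ D.dicutArcs X1, φ1 a.1 ≠ φ2 a.2 + s := by
    intro a ha heq
    apply hs
    have : φ1 a.1 - φ2 a.2 = s := by rw [heq]; exact add_sub_cancel_left _ _
    rw [hSdef]
    exact this ▸ Finset.mem_image_of_mem _ ha
  refine ⟨fun x => if x ∈ X1 then φ1 x else φ2 x + s, ?_⟩
  rintro p hp ⟨c, hc⟩
  have hporig := hp
  obtain ⟨hlen, hnd, hv, hch, hw⟩ := hp
  have hmem1 : ∀ x ∈ p, x ∈ X1 → φ1 x = c := by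
    intro x hx hx1
    have := hc x hx
    simpa [hx1] using this
  have hmem2 : ∀ x ∈ p, x ∉ X1 → φ2 x + s = c := by
    intro x hx hx1
    have := hc x hx
    simpa [hx1] using this
  have hcross : ∀ u v : ℕ, (u, v) ∈ D.arcs → u ∈ p → v ∈ p → u ∈ X1 → v ∉ X1 → False := by
    intro u v harc hu hv' hu1 hv1
    have hdic : (u, v) ∈ D.dicutArcs X1 := by
      simp only [Dgraph.dicutArcs, Finset.mem_filter]
      exact ⟨harc, hu1, hv1⟩
    exact hgood (u, v) hdic (by rw [hmem1 u hu hu1, ← hmem2 v hv' hv1])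
  by_cases hall1 : ∀ x ∈ p, x ∈ X1
  · refine hφ1 p (my_cycle_induce D X1 p hporig hall1) ⟨c, fun x hx => hmem1 x hx (hall1 x hx)⟩
  by_cases hall2 : ∀ x ∈ p, x ∉ X1
  · refine hφ2 p (my_cycle_induce D (D.verts \ X1) p hporig
      (fun x hx => Finset.mem_sdiff.mpr ⟨hv x hx, hall2 x hx⟩)) ⟨c - s, fun x hx => ?_⟩
    have := hmem2 x hx (hall2 x hx)
    rw [eq_sub_iff_add_eq]
    exact this
  push_neg at hall1 hall2
  obtain ⟨y, hyp, hy1⟩ := hall1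
  obtain ⟨x, hxp, hx1⟩ := hall2
  have hlen0 : 0 < p.length := by omega
  simp only [List.Chain', List.isChain_iff_getElem] at hch
  by_cases hstep : ∀ (i : ℕ) (h : i < p.length - 1),
      p.get ⟨i, by omega⟩ ∈ X1 → p.get ⟨i + 1, by omega⟩ ∈ X1
  · -- forward propagation
    have prop : ∀ (d i : ℕ) (h : i + d < p.length),
        p.get ⟨i, by omega⟩ ∈ X1 → p.get ⟨i + d, h⟩ ∈ X1 := by
      intro d
      induction d with
      | zero => intro i h hx; exact hx
      | succ d ih =>
        intro i h hx
        have h1' : i + d < p.length - 1 := by omega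
        exact hstep (i + d) h1' (ih i (by omega) hx)
    obtain ⟨ix, hxg⟩ := List.get_of_mem hxp
    obtain ⟨iy, hyg⟩ := List.get_of_mem hyp
    by_cases hhead : p.get ⟨0, hlen0⟩ ∈ X1
    · -- everything in X1, contradicting y
      have := prop iy.1 0 (by simpa using iy.2) hhead
      have heq : (⟨0 + iy.1, by simpa using iy.2⟩ : Fin p.length) = iy := by
        ext; simp
      rw [heq, hyg] at this
      exact hy1 this
    · -- last ∈ X1, head ∉ X1 : wrap arc crosses
      have hix : p.get ⟨ix.1, ix.2⟩ ∈ X1 := by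
        rw [Fin.eta, hxg]; exact hx1
      have hlast : p.get ⟨p.length - 1, by omega⟩ ∈ X1 := by
        have h' : ix.1 + (p.length - 1 - ix.1) < p.length := by omega
        have := prop (p.length - 1 - ix.1) ix.1 h' hix
        have heq : (⟨ix.1 + (p.length - 1 - ix.1), h'⟩ : Fin p.length)
            = ⟨p.length - 1, by omega⟩ := by
          ext; simp; omega
        rwa [heq] at this
      have harc := hw (p.get ⟨p.length - 1, by omega⟩) (p.get ⟨0, hlen0⟩)
        (my_getLast?_eq hlen0) (my_head?_eq hlen0)
      exact hcross _ _ harc (List.get_mem ..) (List.get_mem ..) hlast hhead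
  · push_neg at hstep
    obtain ⟨i, hi, hiX, hi1X⟩ := hstep
    exact hcross _ _ (hch i (by omega)) (List.getElem_mem ..) (List.getElem_mem ..) hiX hi1X
end

section
/- Let D be a digraph, let u ≠ v be vertices of D, and let P be a directed path from u to v in D. Then λ(D + uv − A(P)) ≤ λ(D), where D + uv − A(P) denotes the digraph obtained from D by adding the arc uv and deleting all arcs of P. -/
open Dgraph

open Dgraph

namespace StmtTwo
open List

/-- consecutive pairs of a list -/
def pr (l : List ℕ) : List (ℕ × ℕ) := l.zip l.tail

lemma pr_nil : pr [] = [] := rfl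
lemma pr_single (a : ℕ) : pr [a] = [] := rfl
lemma pr_cons_cons (a b : ℕ) (t : List ℕ) : pr (a :: b :: t) = (a, b) :: pr (b :: t) := by
  simp [pr]

lemma mem_pr_cons {c : ℕ × ℕ} {l : List ℕ} (h : c ∈ pr l) (a : ℕ) : c ∈ pr (a :: l) := by
  cases l with
  | nil => simp [pr_nil] at h
  | cons b t => rw [pr_cons_cons]; exact mem_cons_of_mem _ h

lemma mem_pr_append_right {c : ℕ × ℕ} {t : List ℕ} (s : List ℕ) (h : c ∈ pr t) :
    c ∈ pr (s ++ t) := by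
  induction s with
  | nil => simpa using h
  | cons a s ih => exact mem_pr_cons ih a

lemma mem_pr_append_left {c : ℕ × ℕ} {s : List ℕ} (t : List ℕ) (h : c ∈ pr s) :
    c ∈ pr (s ++ t) := by
  induction s with
  | nil => simp [pr_nil] at h
  | cons a s ih =>
    cases s with
    | nil => simp [pr_single] at h
    | cons b s' =>
      rw [pr_cons_cons] at h
      rw [cons_append, cons_append, pr_cons_cons]
      rcases mem_cons.mp h with h | h
      · exact mem_cons.mpr (Or.inl h)
      · exact mem_cons_of_mem _ (by simpa using ih h)

lemma junction_mem_pr : ∀ (l1 : List ℕ) {g : ℕ}, l1.getLast? = some g →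
    ∀ (b : ℕ) (t : List ℕ), (g, b) ∈ pr (l1 ++ b :: t) := by
  intro l1
  induction l1 with
  | nil => intro g h; simp at h
  | cons a l ih =>
    intro g h b t
    cases l with
    | nil =>
      simp at h; subst h
      rw [singleton_append, pr_cons_cons]; exact mem_cons_self
    | cons c l' =>
      rw [getLast?_cons_cons] at h
      have := ih h b t
      rw [cons_append]
      exact mem_pr_cons this a

/-- prefix splitting -/
lemma pr_append_subset_left : ∀ (A : List ℕ) {l2 : List ℕ} {h : ℕ},
    l2.head? = some h → ∀ c ∈ pr (A ++ l2), c ∈ pr (A ++ [h]) ∨ c ∈ pr l2 := by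
  intro A
  induction A with
  | nil => intro l2 h hh c hc; right; simpa using hc
  | cons a A ih =>
    intro l2 h hh c hc
    cases A with
    | nil =>
      cases l2 with
      | nil => simp at hh
      | cons z l2' =>
        simp at hh; subst hh
        rw [singleton_append, pr_cons_cons] at hc
        rcases mem_cons.mp hc with h1 | h1
        · left; subst h1; rw [singleton_append, pr_cons_cons]; exact mem_cons_self
        · right; exact h1
    | cons d A' =>
      rw [cons_append, cons_append, pr_cons_cons] at hc
      rcases mem_cons.mp hc with h1 | h1
      · left; subst h1
        rw [cons_append, cons_append, pr_cons_cons]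
        exact mem_cons_self
      · rcases ih hh c (by simpa using h1) with h2 | h2
        · left
          rw [cons_append]
          exact mem_pr_cons h2 a
        · right; exact h2

/-- suffix splitting -/
lemma pr_append_subset_right : ∀ (l2 : List ℕ) {g : ℕ} (B : List ℕ),
    l2.getLast? = some g → ∀ c ∈ pr (l2 ++ B), c ∈ pr (g :: B) ∨ c ∈ pr l2 := by
  intro l2
  induction l2 with
  | nil => intro g B h; simp at h
  | cons z l ih =>
    intro g B h c hc
    cases l with
    | nil =>
      simp at h; subst h
      left; simpa using hc
    | cons z2 rest =>
      rw [getLast?_cons_cons] at h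
      rw [cons_append, cons_append, pr_cons_cons] at hc
      rcases mem_cons.mp hc with h1 | h1
      · right; subst h1; rw [pr_cons_cons]; exact mem_cons_self
      · rcases ih B h c (by simpa using h1) with h2 | h2
        · left; exact h2
        · right; exact mem_pr_cons h2 z

lemma mem_of_mem_pr {a b : ℕ} {l : List ℕ} (h : (a, b) ∈ pr l) : a ∈ l ∧ b ∈ l := by
  have := List.of_mem_zip h
  exact ⟨this.1, mem_of_mem_tail this.2⟩

lemma chain'_of_pr {R : ℕ → ℕ → Prop} : ∀ {l : List ℕ},
    (∀ c ∈ pr l, R c.1 c.2) → l.Chain' R := by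
  intro l
  induction l with
  | nil => intro; exact isChain_nil
  | cons a t ih =>
    intro h
    cases t with
    | nil => exact isChain_singleton a
    | cons b t' =>
      simp only [List.Chain', isChain_cons_cons]
      refine ⟨h (a, b) (by rw [pr_cons_cons]; exact mem_cons_self), ih ?_⟩
      intro c hc
      exact h c (mem_pr_cons hc a)

lemma pr_of_chain' {R : ℕ → ℕ → Prop} : ∀ {l : List ℕ}, l.Chain' R →
    ∀ c ∈ pr l, R c.1 c.2 := by
  intro l
  induction l with
  | nil => intro _ c hc; simp [pr_nil] at hc
  | cons a t ih =>
    intro h c hc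
    cases t with
    | nil => simp [pr_single] at hc
    | cons b t' =>
      simp only [List.Chain', isChain_cons_cons] at h
      rw [pr_cons_cons] at hc
      rcases mem_cons.mp hc with h1 | h1
      · subst h1; exact h.1
      · exact ih h.2 c h1

lemma decomp_of_mem_pr : ∀ {l : List ℕ} {a b : ℕ}, (a, b) ∈ pr l →
    ∃ s t, l = s ++ a :: b :: t := by
  intro l
  induction l with
  | nil => intro a b h; simp [pr_nil] at h
  | cons x t ih =>
    intro a b h
    cases t with
    | nil => simp [pr_single] at h
    | cons y t' =>
      rw [pr_cons_cons] at h
      rcases mem_cons.mp h with h1 | h1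
      · injection h1 with ha hb
        subst ha; subst hb
        exact ⟨[], t', rfl⟩
      · obtain ⟨s, t'', hst⟩ := ih h1
        exact ⟨x :: s, t'', by rw [cons_append, hst]⟩

/-- extraction of a nodup path from a walk -/
lemma extract (R : ℕ → ℕ → Prop) : ∀ (n : ℕ) (x : ℕ) (l : List ℕ) (y : ℕ),
    l.length ≤ n → (x :: l).Chain' R → (x :: l).getLast? = some y →
    ∃ q : List ℕ, q.Nodup ∧ q.Chain' R ∧ q.head? = some x ∧ q.getLast? = some y ∧
      ∀ z ∈ q, z ∈ x :: l := by
  intro n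
  induction n with
  | zero =>
    intro x l y hl hc hlast
    rw [Nat.le_zero, length_eq_zero_iff] at hl
    subst hl
    simp only [getLast?_singleton, Option.some.injEq] at hlast
    exact ⟨[x], by simp, isChain_singleton x, by simp, by simp [hlast], by simp⟩
  | succ n ih =>
    intro x l y hl hc hlast
    by_cases hx : x ∈ l
    · obtain ⟨s, t, rfl⟩ := append_of_mem hx
      have hlt : t.length ≤ n := by
        have := hl; simp [length_append] at this; omega
      have hsplit : x :: (s ++ x :: t) = (x :: s) ++ (x :: t) := by simp
      have hc' : (x :: t).Chain' R := by
        rw [hsplit] at hc; exact hc.right_of_append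
      have hlast' : (x :: t).getLast? = some y := by
        rw [hsplit, getLast?_append] at hlast
        cases h : (x :: t).getLast? with
        | none => simp at h
        | some w => rw [h] at hlast; simp at hlast; simp [hlast]
      obtain ⟨q, h1, h2, h3, h4, h5⟩ := ih x t y hlt hc' hlast'
      exact ⟨q, h1, h2, h3, h4, fun z hz => by
        rcases mem_cons.mp (h5 z hz) with h | h
        · exact mem_cons.mpr (Or.inl h)
        · exact mem_cons_of_mem _ (mem_append_right _ (mem_cons_of_mem _ h))⟩
    · cases l with
      | nil =>
        simp only [getLast?_singleton, Option.some.injEq] at hlast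
        exact ⟨[x], by simp, isChain_singleton x, by simp, by simp [hlast], by simp⟩
      | cons z l' =>
        have hlt : l'.length ≤ n := by simp at hl; omega
        have hc' : (z :: l').Chain' R := (isChain_cons_cons.mp hc).2
        have hlast' : (z :: l').getLast? = some y := by
          rwa [getLast?_cons_cons] at hlast
        obtain ⟨q, h1, h2, h3, h4, h5⟩ := ih z l' y hlt hc' hlast'
        have hq : q ≠ [] := by intro h; rw [h] at h3; simp at h3
        refine ⟨x :: q, ?_, ?_, by simp, ?_, ?_⟩
        · refine nodup_cons.mpr ⟨fun hmem => hx ?_, h1⟩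
          exact h5 x hmem
        · refine h2.cons ?_
          intro w hw
          rw [h3] at hw; simp at hw; subst hw
          exact (isChain_cons_cons.mp hc).1
        · cases q with
          | nil => exact absurd rfl hq
          | cons w q' => rw [getLast?_cons_cons]; exact h4
        · intro w hw
          rcases mem_cons.mp hw with h | h
          · exact mem_cons.mpr (Or.inl h)
          · exact mem_cons_of_mem _ (h5 w h)

end StmtTwo


section Statement2
open StmtTwo List

lemma StmtTwo.mem_arcsOf {c : ℕ × ℕ} {l : List ℕ} : c ∈ Dgraph.arcsOf l ↔ c ∈ pr l :=
  List.mem_toFinset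

lemma StmtTwo.arcsOf_nonempty {q : List ℕ} {x y : ℕ} (hx : q.head? = some x)
    (hy : q.getLast? = some y) (hxy : x ≠ y) : (Dgraph.arcsOf q).Nonempty := by
  match q with
  | [] => simp at hx
  | [a] =>
    simp at hx hy
    exact absurd (hx.symm.trans hy) hxy
  | a :: b :: t =>
    exact ⟨(a, b), mem_arcsOf.mpr (by rw [pr_cons_cons]; exact List.mem_cons_self)⟩

lemma StmtTwo.card_le (E : Dgraph) {x y : ℕ} (hxy : x ≠ y) {m : ℕ}
    (hm : ∃ P : Fin m → List ℕ, (∀ i, E.IsDipath (P i) x y) ∧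
      Pairwise fun i j => Disjoint (Dgraph.arcsOf (P i)) (Dgraph.arcsOf (P j))) :
    m ≤ E.arcs.card := by
  obtain ⟨P, hP, hd⟩ := hm
  have hne : ∀ i, (Dgraph.arcsOf (P i)).Nonempty := fun i =>
    arcsOf_nonempty (hP i).2.1 (hP i).2.2.1 hxy
  have hmem : ∀ i, (hne i).choose ∈ Dgraph.arcsOf (P i) := fun i => (hne i).choose_spec
  have hsub : ∀ i, Dgraph.arcsOf (P i) ⊆ E.arcs := fun i c hc => by
    have := pr_of_chain' (hP i).2.2.2.2 c (mem_arcsOf.mp hc)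
    simpa using this
  calc m = (Finset.univ : Finset (Fin m)).card := by simp
  _ ≤ E.arcs.card := by
      refine Finset.card_le_card_of_injOn (fun i => (hne i).choose)
        (fun i _ => hsub i (hmem i)) ?_
      intro i _ j _ hij
      by_contra hij'
      refine Finset.disjoint_left.mp (hd hij') (hmem i) ?_
      have h2 : Exists.choose (hne i) = Exists.choose (hne j) := hij
      rw [h2]; exact hmem j

lemma StmtTwo.locLam_le_card (E : Dgraph) {x y : ℕ} (hxy : x ≠ y) :
    E.locLam x y ≤ E.arcs.card := by
  simp only [Dgraph.locLam]
  exact csSup_le' (fun m hm => card_le E hxy hm)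

lemma StmtTwo.bddLoc (E : Dgraph) {x y : ℕ} (hxy : x ≠ y) :
    BddAbove {n | ∃ P : Fin n → List ℕ, (∀ i, E.IsDipath (P i) x y) ∧
      Pairwise fun i j => Disjoint (Dgraph.arcsOf (P i)) (Dgraph.arcsOf (P j))} :=
  ⟨E.arcs.card, fun _ hm => card_le E hxy hm⟩

lemma StmtTwo.bddLam (E : Dgraph) :
    BddAbove {n | ∃ u ∈ E.verts, ∃ v ∈ E.verts, u ≠ v ∧ n = E.locLam u v} := by
  refine ⟨E.arcs.card, ?_⟩
  rintro n ⟨x, hx, y, hy, hxy, rfl⟩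
  exact locLam_le_card E hxy

end Statement2

open StmtTwo List

/-- Lemma 3.5: if P is a directed path from u to v, then
λ(D + uv − A(P)) ≤ λ(D). -/
theorem statement_2 (D : Dgraph) (hWF : D.WF) (u v : ℕ)
    (hu : u ∈ D.verts) (hv : v ∈ D.verts) (huv : u ≠ v)
    (p : List ℕ) (hp : D.IsDipath p u v) :
    ((D.addArc u v).delArcs (arcsOf p)).lam ≤ D.lam :=  by
  classical
  obtain ⟨hpnd, hphead, hplast, hpverts, hpchain⟩ := hp
  set D' := (D.addArc u v).delArcs (Dgraph.arcsOf p) with hD'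
  have hverts : D'.verts = D.verts := by
    show insert u (insert v D.verts) = D.verts
    rw [Finset.insert_eq_self.mpr hv, Finset.insert_eq_self.mpr hu]
  have harcs : D'.arcs = insert (u, v) D.arcs \ Dgraph.arcsOf p := rfl
  have conv : ∀ z w (q : List ℕ), D'.IsDipath q z w → (u, v) ∉ Dgraph.arcsOf q →
      D.IsDipath q z w := by
    rintro z w q ⟨h1, h2, h3, h4, h5⟩ hng
    refine ⟨h1, h2, h3, fun a ha => hverts ▸ h4 a ha, ?_⟩
    refine chain'_of_pr ?_
    intro c hc
    have hc' := pr_of_chain' h5 c hc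
    have hcm : (c.1, c.2) ∈ insert (u, v) D.arcs \ Dgraph.arcsOf p := by
      rw [← harcs]; exact hc'
    have hcne : (c.1, c.2) ≠ (u, v) := by
      intro h
      exact hng (by rw [← h]; exact mem_arcsOf.mpr (by simpa using hc))
    rcases Finset.mem_insert.mp (Finset.mem_sdiff.mp hcm).1 with h | h
    · exact absurd h hcne
    · exact h
  have harcsub : ∀ (q : List ℕ) z w, D'.IsDipath q z w →
      Dgraph.arcsOf q ⊆ D'.arcs := fun q z w hq c hc => by
    have := pr_of_chain' hq.2.2.2.2 c (mem_arcsOf.mp hc)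
    simpa using this
  simp only [Dgraph.lam]
  refine csSup_le' ?_
  rintro n ⟨x, hx, y, hy, hxy, rfl⟩
  rw [hverts] at hx hy
  have hloc : D.locLam x y ≤ D.lam := le_csSup (bddLam D) ⟨x, hx, y, hy, hxy, rfl⟩
  refine le_trans ?_ hloc
  simp only [Dgraph.locLam]
  refine csSup_le' ?_
  rintro m ⟨P, hP, hdisj⟩
  refine le_trans (le_csSup (bddLoc D hxy) ?_) le_rfl
  by_cases hcase : ∃ i0, (u, v) ∈ Dgraph.arcsOf (P i0)
  · obtain ⟨i0, hi0⟩ := hcase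
    obtain ⟨hlnd, hlhead, hllast, hlverts, hlchain⟩ := hP i0
    obtain ⟨A, B, hAB⟩ := decomp_of_mem_pr (mem_arcsOf.mp hi0)
    set S : Finset (ℕ × ℕ) := (Dgraph.arcsOf (P i0) \ {(u, v)}) ∪ Dgraph.arcsOf p with hS
    have hSD : S ⊆ D.arcs := by
      intro c hc
      rcases Finset.mem_union.mp hc with h | h
      · obtain ⟨h1, h2⟩ := Finset.mem_sdiff.mp h
        have := pr_of_chain' hlchain c (mem_arcsOf.mp h1)
        have hcm : (c.1, c.2) ∈ insert (u, v) D.arcs \ Dgraph.arcsOf p := by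
          rw [← harcs]; exact this
        rcases Finset.mem_insert.mp (Finset.mem_sdiff.mp hcm).1 with h3 | h3
        · exact absurd (by simpa using h3) (by simpa using h2)
        · simpa using h3
      · have := pr_of_chain' hpchain c (mem_arcsOf.mp h)
        simpa using this
    have hndAB : A.Nodup ∧ (u :: v :: B).Nodup ∧ A.Disjoint (u :: v :: B) := by
      rw [hAB] at hlnd; exact List.nodup_append'.mp hlnd
    have hvA : v ∉ A := fun h => hndAB.2.2 h (by simp)
    have huB : u ∉ B := by
      have := hndAB.2.1
      simp only [List.nodup_cons, List.mem_cons] at this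
      tauto
    set W := A ++ (p ++ B) with hWdef
    have hpBhead : (p ++ B).head? = some u := by
      rw [List.head?_append, hphead]; rfl
    have hWpr : ∀ c ∈ pr W, c ∈ S := by
      intro c hc
      rcases pr_append_subset_left A hpBhead c hc with h | h
      · have hcl : c ∈ pr (P i0) := by
          rw [hAB]
          have heq : A ++ u :: v :: B = (A ++ [u]) ++ v :: B := by simp
          rw [heq]
          exact mem_pr_append_left _ h
        have hcne : c ≠ (u, v) := by
          rintro rfl
          have hmem := (mem_of_mem_pr h).2
          rcases List.mem_append.mp hmem with h' | h'
          · exact hvA h'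
          · exact huv (List.mem_singleton.mp h').symm
        exact Finset.mem_union_left _
          (Finset.mem_sdiff.mpr ⟨mem_arcsOf.mpr hcl, by simp [hcne]⟩)
      · rcases pr_append_subset_right p B hplast c h with h2 | h2
        · have hcl : c ∈ pr (P i0) := by
            rw [hAB]
            exact mem_pr_append_right A (mem_pr_cons h2 u)
          have hcne : c ≠ (u, v) := by
            rintro rfl
            have hmem := (mem_of_mem_pr h2).1
            rcases List.mem_cons.mp hmem with h' | h'
            · exact huv h'
            · exact huB h'
          exact Finset.mem_union_left _
            (Finset.mem_sdiff.mpr ⟨mem_arcsOf.mpr hcl, by simp [hcne]⟩)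
        · exact Finset.mem_union_right _ (mem_arcsOf.mpr h2)
    have hWhead : W.head? = some x := by
      have h1 : (P i0).head? = some x := hlhead
      rw [hAB, List.head?_append] at h1
      rw [hWdef, List.head?_append, hpBhead]
      exact h1
    have hWlast : W.getLast? = some y := by
      have h1 : (P i0).getLast? = some y := hllast
      rw [hAB, List.getLast?_append] at h1
      rw [hWdef, List.getLast?_append, List.getLast?_append]
      have h2 : (u :: v :: B).getLast? = (B.getLast?).or p.getLast? := by
        rw [List.getLast?_cons_cons]
        have : v :: B = [v] ++ B := by simp
        rw [this, List.getLast?_append, hplast]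
        rfl
      rw [h2] at h1
      exact h1
    have hWchain : W.Chain' (fun a b => (a, b) ∈ S) :=
      chain'_of_pr (fun c hc => by simpa using hWpr c hc)
    have hWmemD : ∀ z ∈ W, z ∈ D.verts := by
      intro z hz
      rcases List.mem_append.mp hz with h | h
      · have : z ∈ P i0 := by rw [hAB]; exact List.mem_append_left _ h
        exact hverts ▸ hlverts z this
      · rcases List.mem_append.mp h with h' | h'
        · exact hpverts z h'
        · have : z ∈ P i0 := by
            rw [hAB]
            exact List.mem_append_right _ (by simp [h'])
          exact hverts ▸ hlverts z this
    obtain ⟨x', W', hWW⟩ : ∃ x' W', W = x' :: W' := by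
      cases hW : W with
      | nil => rw [hW] at hWhead; simp at hWhead
      | cons a t => exact ⟨a, t, rfl⟩
    have hx' : x' = x := by rw [hWW] at hWhead; simpa using hWhead
    rw [hx'] at hWW
    rw [hWW] at hWchain hWlast hWmemD
    obtain ⟨q, hqnd, hqchain, hqhead, hqlast, hqmem⟩ :=
      extract _ W'.length x W' y le_rfl hWchain hWlast
    have hqS : Dgraph.arcsOf q ⊆ S := by
      intro c hc
      have := pr_of_chain' hqchain c (mem_arcsOf.mp hc)
      simpa using this
    have hqdip : D.IsDipath q x y := by
      refine ⟨hqnd, hqhead, hqlast, fun z hz => hWmemD z (hqmem z hz), ?_⟩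
      exact hqchain.imp (fun a b h => hSD h)
    have hqdisj : ∀ j, j ≠ i0 → Disjoint (Dgraph.arcsOf q) (Dgraph.arcsOf (P j)) := by
      intro j hj
      rw [Finset.disjoint_left]
      intro c hc hcj
      rcases Finset.mem_union.mp (hqS hc) with h | h
      · exact Finset.disjoint_left.mp (hdisj (fun h' : i0 = j => hj h'.symm))
          (Finset.mem_sdiff.mp h).1 hcj
      · have := harcsub (P j) x y (hP j) hcj
        rw [harcs] at this
        exact (Finset.mem_sdiff.mp this).2 h
    refine ⟨fun j => if j = i0 then q else P j, fun j => ?_, fun i j hij => ?_⟩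
    · by_cases hj : j = i0
      · simp only [if_pos hj]; exact hqdip
      · simp only [if_neg hj]
        refine conv x y (P j) (hP j) ?_
        exact Finset.disjoint_left.mp (hdisj (fun h' : i0 = j => hj h'.symm)) hi0
    · by_cases hi : i = i0 <;> by_cases hj : j = i0
      · exact absurd (hi.trans hj.symm) hij
      · simp only [if_pos hi, if_neg hj]; exact hqdisj j hj
      · simp only [if_neg hi, if_pos hj]; exact (hqdisj i hi).symm
      · simp only [if_neg hi, if_neg hj]; exact hdisj hij
  · push_neg at hcase
    exact ⟨P, fun i => conv x y (P i) (hP i) (hcase i), hdisj⟩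
end

section
/- Let k ≥ 1, let D be a k-extremal digraph, and suppose the digon [u, v] is contained in A(D). Then for every k-dicolouring of D − [u, v] there is no monochromatic directed path from u to v and no monochromatic directed path from v to u. -/
open Dgraph

open Dgraph

namespace S5aux




/-- arcs of a list as in Dgraph.arcsOf -/
def arcsOf (p : List ℕ) : Finset (ℕ × ℕ) := (p.zip p.tail).toFinset

lemma arcsOf_nil : arcsOf [] = ∅ := rfl
lemma arcsOf_single (x : ℕ) : arcsOf [x] = ∅ := rfl
lemma arcsOf_cons (w y : ℕ) (t : List ℕ) :
    arcsOf (w :: y :: t) = insert (w, y) (arcsOf (y :: t)) := by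
  simp [arcsOf, List.zip_cons_cons]

lemma arcs_mem {p : List ℕ} {e : ℕ × ℕ} (h : e ∈ arcsOf p) : e.1 ∈ p ∧ e.2 ∈ p := by
  rcases e with ⟨a, b⟩
  have := List.of_mem_zip (List.mem_toFinset.1 h)
  exact ⟨this.1, List.mem_of_mem_tail this.2⟩

lemma chain'_arcs {r : ℕ → ℕ → Prop} : ∀ {p : List ℕ}, p.Chain' r →
    ∀ e ∈ arcsOf p, r e.1 e.2 := by
  intro p
  induction p with
  | nil => intro _ e he; simp [arcsOf_nil] at he
  | cons w t ih =>
    intro hc e he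
    cases t with
    | nil => simp [arcsOf_single] at he
    | cons y t' =>
      rw [arcsOf_cons] at he
      rcases Finset.mem_insert.1 he with h | h
      · subst h; exact (List.isChain_cons_cons.1 hc).1
      · exact ih (List.isChain_cons_cons.1 hc).2 e h

lemma chain'_mono_mem {r s : ℕ → ℕ → Prop} : ∀ {p : List ℕ}, p.Chain' r →
    (∀ x ∈ p, ∀ y ∈ p, r x y → s x y) → p.Chain' s := by
  intro p
  induction p with
  | nil => intro _ _; exact List.isChain_nil
  | cons w t ih =>
    intro hc h
    cases t with
    | nil => exact List.isChain_singleton _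
    | cons y t' =>
      simp only [List.Chain', List.isChain_cons_cons] at hc ⊢
      refine ⟨h w (by simp) y (by simp) hc.1, ih hc.2 ?_⟩
      intro x hx z hz hr
      exact h x (by simp [hx]) z (by simp [hz]) hr

lemma mem_of_head? {p : List ℕ} {a : ℕ} (h : p.head? = some a) : a ∈ p := by
  cases p with
  | nil => simp at h
  | cons x t => simp_all

lemma mem_of_getLast? : ∀ {p : List ℕ} {a : ℕ}, p.getLast? = some a → a ∈ p := by
  intro p
  induction p with
  | nil => intro a h; simp at h
  | cons x t ih =>
    intro a h
    cases t with
    | nil => simp_all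
    | cons y t' =>
      rw [List.getLast?_cons_cons] at h
      exact List.mem_cons_of_mem _ (ih h)

lemma two_le_length {p : List ℕ} {a b : ℕ} (hh : p.head? = some a)
    (hl : p.getLast? = some b) (hab : a ≠ b) : 2 ≤ p.length := by
  cases p with
  | nil => simp at hh
  | cons x t =>
    cases t with
    | nil => simp_all
    | cons y t' => simp [List.length_cons]

lemma every_vertex_on_arc : ∀ {p : List ℕ}, 2 ≤ p.length → ∀ x ∈ p,
    ∃ e ∈ arcsOf p, e.1 = x ∨ e.2 = x := by
  intro p
  induction p with
  | nil => intro h; simp at h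
  | cons w t ih =>
    intro hlen x hx
    cases t with
    | nil => simp at hlen
    | cons y t' =>
      rcases List.mem_cons.1 hx with rfl | hx'
      · exact ⟨(x, y), by simp [arcsOf_cons], Or.inl rfl⟩
      · cases t' with
        | nil =>
          rcases List.mem_singleton.1 hx' with rfl
          exact ⟨(w, x), by simp [arcsOf_cons], Or.inr rfl⟩
        | cons z t'' =>
          obtain ⟨e, he, hex⟩ := ih (by simp [List.length_cons]) x hx'
          exact ⟨e, by rw [arcsOf_cons]; exact Finset.mem_insert_of_mem he, hex⟩

lemma arcsOf_nonempty {p : List ℕ} (h : 2 ≤ p.length) : (arcsOf p).Nonempty := by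
  cases p with
  | nil => simp at h
  | cons w t =>
    cases t with
    | nil => simp at h
    | cons y t' => exact ⟨(w, y), by simp [arcsOf_cons]⟩

lemma chain_truncate {r : ℕ → ℕ → Prop} : ∀ {p : List ℕ}, p.Chain' r → p.Nodup →
    ∀ {a c : ℕ}, p.head? = some a → c ∈ p →
    ∃ q : List ℕ, q.Nodup ∧ q.head? = some a ∧ q.getLast? = some c ∧ q.Chain' r ∧
      ∀ x ∈ q, x ∈ p := by
  intro p
  induction p with
  | nil => intro _ _ a c _ hc; simp at hc
  | cons x t ih =>
    intro hc hnd a c hh hcp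
    have hax : x = a := by simpa using hh
    subst hax
    by_cases hxc : x = c
    · exact ⟨[x], by simp, by simp, by simp [hxc], List.isChain_singleton _, by intro y hy; simp at hy; simp [hy]⟩
    · have hct : c ∈ t := by
        rcases List.mem_cons.1 hcp with h | h
        · exact absurd h.symm hxc
        · exact h
      cases t with
      | nil => simp at hct
      | cons y t' =>
        obtain ⟨q, hqnd, hqh, hql, hqc, hqsub⟩ :=
          ih (List.isChain_cons_cons.1 hc).2 (List.nodup_cons.1 hnd).2 (a := y) (by simp) hct
        cases q with
        | nil => simp at hqh
        | cons y' q' =>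
          have hyy : y' = y := by simpa using hqh
          subst hyy
          refine ⟨x :: y' :: q', ?_, by simp, ?_, ?_, ?_⟩
          · rw [List.nodup_cons]
            exact ⟨fun hmem => (List.nodup_cons.1 hnd).1 (hqsub _ hmem), hqnd⟩
          · rw [List.getLast?_cons_cons]; exact hql
          · simp only [List.Chain', List.isChain_cons_cons]
            exact ⟨(List.isChain_cons_cons.1 hc).1, hqc⟩
          · intro z hz
            rcases List.mem_cons.1 hz with h | h
            · simp [h]
            · exact List.mem_cons_of_mem _ (hqsub _ h)

/-- reach implies a simple chain path -/
lemma reach_path {r : ℕ → ℕ → Prop} {a b : ℕ} (h : Relation.ReflTransGen r a b) :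
    ∃ p : List ℕ, p.Nodup ∧ p.head? = some a ∧ p.getLast? = some b ∧ p.Chain' r := by
  induction h with
  | refl => exact ⟨[a], by simp [List.Chain', List.isChain_singleton]⟩
  | @tail b' c hab hbc ih =>
    obtain ⟨p, hnd, hh, hl, hc⟩ := ih
    by_cases hcp : c ∈ p
    · obtain ⟨q, h1, h2, h3, h4, _⟩ := chain_truncate hc hnd hh hcp
      exact ⟨q, h1, h2, h3, h4⟩
    · refine ⟨p ++ [c], ?_, ?_, by simp [List.getLast?_concat], ?_⟩
      · simp [List.nodup_append, hnd, hcp]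
        exact fun a ha h => hcp (h ▸ ha)
      · cases p with
        | nil => simp at hh
        | cons x t => simpa using hh
      · simp only [List.Chain', List.isChain_append]
        refine ⟨hc, List.isChain_singleton _, ?_⟩
        intro x hx y hy
        simp at hy; subst hy
        rw [hl] at hx; simp at hx; subst hx
        exact hbc

lemma lin_cross {r : ℕ → ℕ → Prop} {Xp : ℕ → Prop} : ∀ {p : List ℕ}, p.Chain' r →
    ∀ {a b : ℕ}, p.head? = some a → p.getLast? = some b → Xp a → ¬Xp b →
    ∃ x y, r x y ∧ Xp x ∧ ¬Xp y := by
  intro p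
  induction p with
  | nil => intro _ a b hh; simp at hh
  | cons w t ih =>
    intro hc a b hh hl hXa hXb
    have : w = a := by simpa using hh
    subst this
    cases t with
    | nil =>
      have : w = b := by simpa using hl
      exact absurd (this ▸ hXa) hXb
    | cons y t' =>
      by_cases hXy : Xp y
      · exact ih (List.isChain_cons_cons.1 hc).2 (by simp) (by rwa [List.getLast?_cons_cons] at hl) hXy hXb
      · exact ⟨w, y, (List.isChain_cons_cons.1 hc).1, hXa, hXy⟩

lemma chain_prop_last {r : ℕ → ℕ → Prop} {Xp : ℕ → Prop}
    (hprop : ∀ x y, r x y → Xp x → Xp y) : ∀ {p : List ℕ}, p.Chain' r →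
    ∀ {a : ℕ}, a ∈ p → Xp a → ∀ {c : ℕ}, p.getLast? = some c → Xp c := by
  intro p
  induction p with
  | nil => intro _ a ha; simp at ha
  | cons w t ih =>
    intro hc a ha hXa c hl
    cases t with
    | nil =>
      have h1 : a = w := by simpa using ha
      have h2 : w = c := by simpa using hl
      exact h2 ▸ (h1 ▸ hXa)
    | cons y t' =>
      rw [List.getLast?_cons_cons] at hl
      rcases List.mem_cons.1 ha with rfl | ha'
      · have hXy : Xp y := hprop a y (List.isChain_cons_cons.1 hc).1 hXa
        exact ih (List.isChain_cons_cons.1 hc).2 (by simp) hXy hl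
      · exact ih (List.isChain_cons_cons.1 hc).2 ha' hXa hl

lemma chain_prop_all {r : ℕ → ℕ → Prop} {Xp : ℕ → Prop}
    (hprop : ∀ x y, r x y → Xp x → Xp y) : ∀ {p : List ℕ}, p.Chain' r →
    ∀ {a : ℕ}, p.head? = some a → Xp a → ∀ x ∈ p, Xp x := by
  intro p
  induction p with
  | nil => intro _ a ha; simp at ha
  | cons w t ih =>
    intro hc a hh hXa x hx
    have : w = a := by simpa using hh
    subst this
    rcases List.mem_cons.1 hx with rfl | hx'
    · exact hXa
    · cases t with
      | nil => simp at hx'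
      | cons y t' =>
        exact ih (List.isChain_cons_cons.1 hc).2 (by simp)
          (hprop w y (List.isChain_cons_cons.1 hc).1 hXa) x hx'

lemma cyc_cross {r : ℕ → ℕ → Prop} {Xp : ℕ → Prop} {p : List ℕ}
    (hc : p.Chain' r)
    (hwrap : ∀ x y, p.getLast? = some x → p.head? = some y → r x y)
    {a b : ℕ} (ha : a ∈ p) (hXa : Xp a) (hb : b ∈ p) (hXb : ¬Xp b) :
    ∃ x y, r x y ∧ Xp x ∧ ¬Xp y := by
  by_contra hno
  push_neg at hno
  have hprop : ∀ x y, r x y → Xp x → Xp y := by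
    intro x y hr hx
    by_contra hy
    exact hy (hno x y hr hx)
  cases p with
  | nil => simp at ha
  | cons w t =>
    obtain ⟨c, hc'⟩ : ∃ c, (w :: t).getLast? = some c := ⟨(w::t).getLast (by simp), List.getLast?_eq_getLast _⟩
    have hXc : Xp c := chain_prop_last hprop hc ha hXa hc'
    have hXw : Xp w := hprop c w (hwrap c w hc' (by simp)) hXc
    exact hXb (chain_prop_all hprop hc (by simp) hXw b hb)


noncomputable def outC (E : Finset (ℕ × ℕ)) (x : ℕ) : ℕ :=
  (E.filter (fun e => e.1 = x)).card
noncomputable def inC (E : Finset (ℕ × ℕ)) (x : ℕ) : ℕ :=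
  (E.filter (fun e => e.2 = x)).card

lemma outC_eq_zero {p : List ℕ} {x : ℕ} (hx : x ∉ p) : outC (arcsOf p) x = 0 := by
  rw [outC, Finset.card_eq_zero, Finset.filter_eq_empty_iff]
  intro e he hex
  exact hx (hex ▸ (arcs_mem he).1)

lemma inC_eq_zero {p : List ℕ} {x : ℕ} (hx : x ∉ p) : inC (arcsOf p) x = 0 := by
  rw [inC, Finset.card_eq_zero, Finset.filter_eq_empty_iff]
  intro e he hex
  exact hx (hex ▸ (arcs_mem he).2)

lemma path_degree : ∀ {p : List ℕ}, p.Nodup → ∀ {a b : ℕ}, p.head? = some a →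
    p.getLast? = some b → ∀ {x : ℕ}, x ∈ p →
    outC (arcsOf p) x = (if x = b then 0 else 1) ∧
    inC (arcsOf p) x = (if x = a then 0 else 1) := by
  intro p
  induction p with
  | nil => intro _ a b hh; simp at hh
  | cons w t ih =>
    intro hnd a b hh hl x hx
    have hwa : w = a := by simpa using hh
    subst hwa
    cases t with
    | nil =>
      have hxw : x = w := by simpa using hx
      have hwb : w = b := by simpa using hl
      subst hxw; subst hwb
      constructor <;> simp [outC, inC, arcsOf_single]
    | cons y t' =>
      rw [List.getLast?_cons_cons] at hl
      have hbt : b ∈ y :: t' := mem_of_getLast? hl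
      have hwnt : w ∉ y :: t' := (List.nodup_cons.1 hnd).1
      have hwy : w ≠ y := by intro h; exact hwnt (h ▸ List.mem_cons_self)
      rcases List.mem_cons.1 hx with rfl | hx'
      · -- x = w : head
        have hxb : x ≠ b := fun h => hwnt (h ▸ hbt)
        constructor
        · rw [if_neg hxb, outC, arcsOf_cons, Finset.filter_insert, if_pos rfl]
          rw [Finset.card_insert_of_notMem, Finset.card_eq_zero.2, Nat.zero_add]
          · rw [← Finset.card_eq_zero, ← outC]; exact outC_eq_zero hwnt
          · intro hmem
            exact hwnt (arcs_mem (Finset.mem_of_mem_filter _ hmem)).1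
        · rw [if_pos rfl, inC, arcsOf_cons, Finset.filter_insert, if_neg (by simpa using hwy.symm)]
          rw [Finset.card_eq_zero]
          rw [← Finset.card_eq_zero, ← inC] ; exact inC_eq_zero hwnt
      · -- x in tail
        have hxw : x ≠ w := fun h => hwnt (h ▸ hx')
        obtain ⟨ho, hi⟩ := ih (List.nodup_cons.1 hnd).2 (a := y) (by simp) hl hx'
        constructor
        · rw [outC, arcsOf_cons, Finset.filter_insert, if_neg (by simpa using hxw.symm)]
          exact ho
        · rw [if_neg hxw]
          by_cases hxy : x = y
          · subst hxy
            rw [if_pos rfl] at hi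
            rw [inC, arcsOf_cons, Finset.filter_insert, if_pos (by simp)]
            rw [Finset.card_insert_of_notMem, ← inC, hi]
            intro hmem
            exact hwnt (arcs_mem (Finset.mem_of_mem_filter _ hmem)).1
          · rw [if_neg hxy] at hi
            rw [inC, arcsOf_cons, Finset.filter_insert, if_neg (by simpa using (Ne.symm hxy))]
            exact hi

open scoped Classical

noncomputable def val (B : Finset (ℕ × ℕ)) (u : ℕ) : ℤ := (outC B u : ℤ) - (inC B u : ℤ)

def Cons (B : Finset (ℕ × ℕ)) (u v : ℕ) : Prop :=
  ∀ x, x ≠ u → x ≠ v → outC B x = inC B x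

lemma filter_sdiff' (B C : Finset (ℕ × ℕ)) (P : ℕ × ℕ → Prop) [DecidablePred P] :
    (B \ C).filter P = B.filter P \ C.filter P := by
  ext e; simp [Finset.mem_filter, Finset.mem_sdiff]; tauto

lemma outC_sdiff {B C : Finset (ℕ × ℕ)} (h : C ⊆ B) (x : ℕ) :
    outC (B \ C) x = outC B x - outC C x := by
  rw [outC, outC, outC, filter_sdiff', Finset.card_sdiff_of_subset (Finset.filter_subset_filter _ h)]

lemma inC_sdiff {B C : Finset (ℕ × ℕ)} (h : C ⊆ B) (x : ℕ) :
    inC (B \ C) x = inC B x - inC C x := by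
  rw [inC, inC, inC, filter_sdiff', Finset.card_sdiff_of_subset (Finset.filter_subset_filter _ h)]

lemma outC_le_of_subset {B C : Finset (ℕ × ℕ)} (h : C ⊆ B) (x : ℕ) :
    outC C x ≤ outC B x := Finset.card_le_card (Finset.filter_subset_filter _ h)

lemma inC_le_of_subset {B C : Finset (ℕ × ℕ)} (h : C ⊆ B) (x : ℕ) :
    inC C x ≤ inC B x := Finset.card_le_card (Finset.filter_subset_filter _ h)

lemma outC_union {B C : Finset (ℕ × ℕ)} (h : Disjoint B C) (x : ℕ) :
    outC (B ∪ C) x = outC B x + outC C x := by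
  rw [outC, outC, outC, Finset.filter_union,
    Finset.card_union_of_disjoint (Finset.disjoint_filter_filter h)]

lemma inC_union {B C : Finset (ℕ × ℕ)} (h : Disjoint B C) (x : ℕ) :
    inC (B ∪ C) x = inC B x + inC C x := by
  rw [inC, inC, inC, Finset.filter_union,
    Finset.card_union_of_disjoint (Finset.disjoint_filter_filter h)]

lemma outC_swap_image (C : Finset (ℕ × ℕ)) (x : ℕ) :
    outC (C.image Prod.swap) x = inC C x := by
  rw [outC, inC]
  rw [show (C.image Prod.swap).filter (fun e => e.1 = x)
      = (C.filter (fun e => e.2 = x)).image Prod.swap by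
    ext e
    simp only [Finset.mem_filter, Finset.mem_image]
    constructor
    · rintro ⟨⟨f, hf, rfl⟩, hx⟩; exact ⟨f, ⟨hf, hx⟩, rfl⟩
    · rintro ⟨f, ⟨hf, hx⟩, rfl⟩; exact ⟨⟨f, hf, rfl⟩, hx⟩]
  exact Finset.card_image_of_injective _ Prod.swap_injective

lemma inC_swap_image (C : Finset (ℕ × ℕ)) (x : ℕ) :
    inC (C.image Prod.swap) x = outC C x := by
  rw [inC, outC]
  rw [show (C.image Prod.swap).filter (fun e => e.2 = x)
      = (C.filter (fun e => e.1 = x)).image Prod.swap by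
    ext e
    simp only [Finset.mem_filter, Finset.mem_image]
    constructor
    · rintro ⟨⟨f, hf, rfl⟩, hx⟩; exact ⟨f, ⟨hf, hx⟩, rfl⟩
    · rintro ⟨f, ⟨hf, hx⟩, rfl⟩; exact ⟨⟨f, hf, rfl⟩, hx⟩]
  exact Finset.card_image_of_injective _ Prod.swap_injective

lemma outC_split (E : Finset (ℕ × ℕ)) (q : ℕ × ℕ → Prop) [DecidablePred q] (x : ℕ) :
    outC E x = outC (E.filter q) x + outC (E.filter (fun e => ¬ q e)) x := by
  rw [outC, outC, outC, Finset.filter_comm, Finset.filter_comm (fun e => ¬ q e)]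
  exact (Finset.card_filter_add_card_filter_not (p := q)).symm

lemma inC_split (E : Finset (ℕ × ℕ)) (q : ℕ × ℕ → Prop) [DecidablePred q] (x : ℕ) :
    inC E x = inC (E.filter q) x + inC (E.filter (fun e => ¬ q e)) x := by
  rw [inC, inC, inC, Finset.filter_comm, Finset.filter_comm (fun e => ¬ q e)]
  exact (Finset.card_filter_add_card_filter_not (p := q)).symm

lemma sum_outC (B : Finset (ℕ × ℕ)) (T : Finset ℕ) :
    ∑ x ∈ T, outC B x = (B.filter (fun e => e.1 ∈ T)).card := by
  rw [Finset.card_eq_sum_card_fiberwise (f := Prod.fst) (s := B.filter (fun e => e.1 ∈ T)) (t := T)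
    (fun e he => (Finset.mem_filter.1 he).2)]
  apply Finset.sum_congr rfl
  intro x hx
  rw [outC, Finset.filter_filter]
  congr 1
  apply Finset.filter_congr
  intro e he
  exact ⟨fun h => ⟨h ▸ hx, h⟩, fun h => h.2⟩

lemma sum_inC (B : Finset (ℕ × ℕ)) (T : Finset ℕ) :
    ∑ x ∈ T, inC B x = (B.filter (fun e => e.2 ∈ T)).card := by
  rw [Finset.card_eq_sum_card_fiberwise (f := Prod.snd) (s := B.filter (fun e => e.2 ∈ T)) (t := T)
    (fun e he => (Finset.mem_filter.1 he).2)]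
  apply Finset.sum_congr rfl
  intro x hx
  rw [inC, Finset.filter_filter]
  congr 1
  apply Finset.filter_congr
  intro e he
  exact ⟨fun h => ⟨h ▸ hx, h⟩, fun h => h.2⟩

lemma flow_cut {B : Finset (ℕ × ℕ)} {u v : ℕ} (hcons : Cons B u v)
    (Sp : ℕ → Prop) (hu : Sp u) (hv : ¬ Sp v) :
    val B u = ((B.filter (fun e => Sp e.1 ∧ ¬ Sp e.2)).card : ℤ)
      - ((B.filter (fun e => ¬ Sp e.1 ∧ Sp e.2)).card : ℤ) := by
  set T : Finset ℕ := (insert u (B.image Prod.fst ∪ B.image Prod.snd)).filter Sp with hT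
  have huT : u ∈ T := by simp [hT, hu]
  have hvT : v ∉ T := by simp [hT, hv]
  have hval : val B u = ∑ x ∈ T, ((outC B x : ℤ) - (inC B x : ℤ)) := by
    rw [Finset.sum_eq_single_of_mem u huT]
    · rfl
    · intro x hx hne
      have hxv : x ≠ v := fun h => hvT (h ▸ hx)
      rw [hcons x hne hxv]; ring
  rw [hval, Finset.sum_sub_distrib, ← Nat.cast_sum, ← Nat.cast_sum, sum_outC, sum_inC]
  have h1 : B.filter (fun e => e.1 ∈ T) = B.filter (fun e => Sp e.1) := by
    apply Finset.filter_congr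
    intro e he
    constructor
    · intro h; exact (Finset.mem_filter.1 h).2
    · intro h
      exact Finset.mem_filter.2 ⟨Finset.mem_insert_of_mem
        (Finset.mem_union_left _ (Finset.mem_image_of_mem Prod.fst he)), h⟩
  have h2 : B.filter (fun e => e.2 ∈ T) = B.filter (fun e => Sp e.2) := by
    apply Finset.filter_congr
    intro e he
    constructor
    · intro h; exact (Finset.mem_filter.1 h).2
    · intro h
      exact Finset.mem_filter.2 ⟨Finset.mem_insert_of_mem
        (Finset.mem_union_right _ (Finset.mem_image_of_mem Prod.snd he)), h⟩
  rw [h1, h2]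
  have h3 : (B.filter (fun e => Sp e.1)).card
      = (B.filter (fun e => Sp e.1 ∧ Sp e.2)).card
        + (B.filter (fun e => Sp e.1 ∧ ¬ Sp e.2)).card := by
    rw [← Finset.filter_filter, ← Finset.filter_filter]
    exact (Finset.card_filter_add_card_filter_not (p := fun e : ℕ × ℕ => Sp e.2)).symm
  have h4 : (B.filter (fun e => Sp e.2)).card
      = (B.filter (fun e => Sp e.1 ∧ Sp e.2)).card
        + (B.filter (fun e => ¬ Sp e.1 ∧ Sp e.2)).card := by
    have : ∀ C : Finset (ℕ × ℕ), C.filter (fun e => Sp e.1 ∧ Sp e.2)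
        = C.filter (fun e => Sp e.2 ∧ Sp e.1) := by
      intro C; apply Finset.filter_congr; intro e _; exact ⟨fun h => ⟨h.2, h.1⟩, fun h => ⟨h.2, h.1⟩⟩
    have h5 : ∀ C : Finset (ℕ × ℕ), C.filter (fun e => ¬ Sp e.1 ∧ Sp e.2)
        = C.filter (fun e => Sp e.2 ∧ ¬ Sp e.1) := by
      intro C; apply Finset.filter_congr; intro e _; exact ⟨fun h => ⟨h.2, h.1⟩, fun h => ⟨h.2, h.1⟩⟩
    rw [this, h5, ← Finset.filter_filter, ← Finset.filter_filter]
    exact (Finset.card_filter_add_card_filter_not (p := fun e : ℕ × ℕ => Sp e.1)).symm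
  rw [h3, h4]
  push_cast
  ring

lemma arcs_chain' {r : ℕ → ℕ → Prop} : ∀ {p : List ℕ},
    (∀ e ∈ arcsOf p, r e.1 e.2) → p.Chain' r := by
  intro p
  induction p with
  | nil => intro _; exact List.isChain_nil
  | cons w t ih =>
    intro h
    cases t with
    | nil => exact List.isChain_singleton _
    | cons y t' =>
      simp only [List.Chain', List.isChain_cons_cons]
      constructor
      · exact h (w, y) (by rw [arcsOf_cons]; exact Finset.mem_insert_self _ _)
      · exact ih (fun e he => h e (by rw [arcsOf_cons]; exact Finset.mem_insert_of_mem he))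

lemma augment {A B : Finset (ℕ × ℕ)} {u v : ℕ} (huv : u ≠ v) (hBA : B ⊆ A)
    (hcons : Cons B u v)
    (hr : Relation.ReflTransGen (fun x y => (x, y) ∈ A \ B ∨ (y, x) ∈ B) u v) :
    ∃ B', B' ⊆ A ∧ Cons B' u v ∧ val B' u = val B u + 1 := by
  obtain ⟨p, hnd, hh, hl, hc⟩ := reach_path hr
  set E := arcsOf p with hE
  set Ef := E.filter (fun e => e ∈ A \ B) with hEf
  set Eb := E.filter (fun e => e ∉ A \ B) with hEb
  have hEbB : ∀ e ∈ Eb, e.swap ∈ B := by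
    intro e he
    have h1 := chain'_arcs hc e (Finset.mem_of_mem_filter _ he)
    have h2 := (Finset.mem_filter.1 he).2
    rcases h1 with h | h
    · exact absurd h h2
    · exact h
  set R := Eb.image Prod.swap with hR
  have hRB : R ⊆ B := by
    intro e he
    obtain ⟨f, hf, rfl⟩ := Finset.mem_image.1 he
    exact hEbB f hf
  have hEfB : Ef ⊆ A \ B := fun e he => (Finset.mem_filter.1 he).2
  refine ⟨(B \ R) ∪ Ef, ?_, ?_, ?_⟩
  · apply Finset.union_subset
    · exact (Finset.sdiff_subset).trans hBA
    · exact hEfB.trans (Finset.sdiff_subset)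
  all_goals {
    have hdisj : Disjoint (B \ R) Ef := by
      rw [Finset.disjoint_right]
      intro e he
      exact fun hmem => (Finset.mem_sdiff.1 (hEfB he)).2 (Finset.mem_sdiff.1 hmem).1
    have hout : ∀ x, outC ((B \ R) ∪ Ef) x = (outC B x - inC Eb x) + outC Ef x := by
      intro x
      rw [outC_union hdisj, outC_sdiff hRB, hR, outC_swap_image]
    have hin : ∀ x, inC ((B \ R) ∪ Ef) x = (inC B x - outC Eb x) + inC Ef x := by
      intro x
      rw [inC_union hdisj, inC_sdiff hRB, hR, inC_swap_image]
    have hsplit_out : ∀ x, outC E x = outC Ef x + outC Eb x := fun x =>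
      outC_split E (fun e => e ∈ A \ B) x
    have hsplit_in : ∀ x, inC E x = inC Ef x + inC Eb x := fun x =>
      inC_split E (fun e => e ∈ A \ B) x
    have hinEbB : ∀ x, inC Eb x ≤ outC B x := by
      intro x
      rw [← outC_swap_image Eb x]
      exact outC_le_of_subset hRB x
    have houtEbB : ∀ x, outC Eb x ≤ inC B x := by
      intro x
      rw [← inC_swap_image Eb x]
      exact inC_le_of_subset hRB x
    first
    | { -- conservation
        intro x hxu hxv
        have hdeg : outC E x = inC E x := by
          by_cases hxp : x ∈ p
          · obtain ⟨h1, h2⟩ := path_degree hnd hh hl hxp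
            rw [← hE] at h1 h2
            rw [h1, h2, if_neg hxv, if_neg hxu]
          · rw [hE, outC_eq_zero hxp, inC_eq_zero hxp]
        have h1 := hout x
        have h2 := hin x
        have h3 := hcons x hxu hxv
        have h4 := hsplit_out x
        have h5 := hsplit_in x
        have h6 := hinEbB x
        have h7 := houtEbB x
        omega }
    | { -- value
        have hup : u ∈ p := mem_of_head? hh
        obtain ⟨h1, h2⟩ := path_degree hnd hh hl hup
        rw [← hE] at h1 h2
        rw [if_neg huv] at h1
        rw [if_pos rfl] at h2
        have h3 := hout u
        have h4 := hin u
        have h5 := hsplit_out u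
        have h6 := hsplit_in u
        have h7 := hinEbB u
        have h8 := houtEbB u
        simp only [val]
        omega }
  }

lemma remove_path {B : Finset (ℕ × ℕ)} {u v : ℕ} (huv : u ≠ v) (hcons : Cons B u v)
    {p : List ℕ} (hnd : p.Nodup) (hh : p.head? = some u) (hl : p.getLast? = some v)
    (hsub : arcsOf p ⊆ B) :
    Cons (B \ arcsOf p) u v ∧ val (B \ arcsOf p) u = val B u - 1 := by
  constructor
  · intro x hxu hxv
    rw [outC_sdiff hsub, inC_sdiff hsub]
    have h3 := hcons x hxu hxv
    have h6 := outC_le_of_subset hsub x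
    have h7 := inC_le_of_subset hsub x
    have hdeg : outC (arcsOf p) x = inC (arcsOf p) x := by
      by_cases hxp : x ∈ p
      · obtain ⟨h1, h2⟩ := path_degree hnd hh hl hxp
        rw [h1, h2, if_neg hxv, if_neg hxu]
      · rw [outC_eq_zero hxp, inC_eq_zero hxp]
    omega
  · have hup : u ∈ p := mem_of_head? hh
    obtain ⟨h1, h2⟩ := path_degree hnd hh hl hup
    rw [if_neg huv] at h1
    rw [if_pos rfl] at h2
    have h6 := outC_le_of_subset hsub u
    have h7 := inC_le_of_subset hsub u
    simp only [val, outC_sdiff hsub, inC_sdiff hsub]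
    omega

lemma flow_paths {A : Finset (ℕ × ℕ)} {u v : ℕ} (huv : u ≠ v) :
    ∀ (m : ℕ) (B : Finset (ℕ × ℕ)), B ⊆ A → Cons B u v → (m : ℤ) ≤ val B u →
    ∃ P : Fin m → List ℕ,
      (∀ i, (P i).Nodup ∧ (P i).head? = some u ∧ (P i).getLast? = some v ∧
        arcsOf (P i) ⊆ B) ∧
      Pairwise fun i j => Disjoint (arcsOf (P i)) (arcsOf (P j)) := by
  intro m
  induction m with
  | zero =>
    intro B _ _ _
    exact ⟨fun i => i.elim0, fun i => i.elim0, fun i => i.elim0⟩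
  | succ m ih =>
    intro B hBA hcons hval
    set Sp : ℕ → Prop := fun x => Relation.ReflTransGen (fun a b => (a, b) ∈ B) u x with hSp
    have hSpv : Sp v := by
      by_contra hv
      have hcross : B.filter (fun e => Sp e.1 ∧ ¬ Sp e.2) = ∅ := by
        rw [Finset.filter_eq_empty_iff]
        rintro e he ⟨h1, h2⟩
        exact h2 (h1.tail (by exact he))
      have := flow_cut hcons Sp Relation.ReflTransGen.refl hv
      rw [hcross] at this
      simp at this
      omega
    obtain ⟨p, hnd, hh, hl, hc⟩ := reach_path hSpv
    have hsub : arcsOf p ⊆ B := fun e he => chain'_arcs hc e he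
    obtain ⟨hcons', hval'⟩ := remove_path huv hcons hnd hh hl hsub
    obtain ⟨P', hP', hpair⟩ := ih (B \ arcsOf p) ((Finset.sdiff_subset).trans hBA) hcons'
      (by rw [hval']; push_cast; omega)
    refine ⟨Fin.cons p P', ?_, ?_⟩
    · intro i
      induction i using Fin.cases with
      | zero => exact ⟨hnd, hh, hl, hsub⟩
      | succ i' =>
        obtain ⟨a1, a2, a3, a4⟩ := hP' i'
        exact ⟨a1, a2, a3, a4.trans Finset.sdiff_subset⟩
    · intro i j hne
      induction i using Fin.cases with
      | zero =>
        induction j using Fin.cases with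
        | zero => exact absurd rfl hne
        | succ j' =>
          simp only [Fin.cons_zero, Fin.cons_succ]
          rw [Finset.disjoint_left]
          intro e hep heq
          exact (Finset.mem_sdiff.1 ((hP' j').2.2.2 heq)).2 hep
      | succ i' =>
        induction j using Fin.cases with
        | zero =>
          simp only [Fin.cons_zero, Fin.cons_succ]
          rw [Finset.disjoint_right]
          intro e hep heq
          exact (Finset.mem_sdiff.1 ((hP' i').2.2.2 heq)).2 hep
        | succ j' =>
          simp only [Fin.cons_succ]
          exact hpair (fun h => hne (congrArg Fin.succ h))

lemma exists_flow {A : Finset (ℕ × ℕ)} {u v : ℕ} (huv : u ≠ v) (k : ℕ)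
    (hnocut : ∀ F : Finset (ℕ × ℕ), F.card ≤ k →
      Relation.ReflTransGen (fun x y => (x, y) ∈ A \ F) u v) :
    ∀ m, m ≤ k + 1 → ∃ B, B ⊆ A ∧ Cons B u v ∧ (m : ℤ) ≤ val B u := by
  intro m
  induction m with
  | zero =>
    intro _
    refine ⟨∅, Finset.empty_subset _, ?_, ?_⟩
    · intro x _ _; simp [outC, inC]
    · simp [val, outC, inC]
  | succ m ih =>
    intro hm
    obtain ⟨B, hBA, hcons, hval⟩ := ih (by omega)
    by_cases hres : Relation.ReflTransGen (fun x y => (x, y) ∈ A \ B ∨ (y, x) ∈ B) u v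
    · obtain ⟨B', h1, h2, h3⟩ := augment huv hBA hcons hres
      exact ⟨B', h1, h2, by rw [h3]; push_cast; omega⟩
    · set Sp : ℕ → Prop :=
        fun x => Relation.ReflTransGen (fun a b => (a, b) ∈ A \ B ∨ (b, a) ∈ B) u x with hSp
      set F := A.filter (fun e => Sp e.1 ∧ ¬ Sp e.2) with hF
      have hFB : F ⊆ B := by
        intro e he
        obtain ⟨heA, h1, h2⟩ := Finset.mem_filter.1 he
        by_contra heB
        exact h2 (h1.tail (Or.inl (Finset.mem_sdiff.2 ⟨heA, heB⟩)))
      have hcrossF : B.filter (fun e => Sp e.1 ∧ ¬ Sp e.2) = F := by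
        apply Finset.Subset.antisymm
        · intro e he
          obtain ⟨heB, hcond⟩ := Finset.mem_filter.1 he
          exact Finset.mem_filter.2 ⟨hBA heB, hcond⟩
        · intro e he
          exact Finset.mem_filter.2 ⟨hFB he, (Finset.mem_filter.1 he).2⟩
      have hcrossIn : B.filter (fun e => ¬ Sp e.1 ∧ Sp e.2) = ∅ := by
        rw [Finset.filter_eq_empty_iff]
        rintro e he ⟨h1, h2⟩
        exact h1 (h2.tail (Or.inr (by exact he)))
      have hvalF := flow_cut hcons Sp Relation.ReflTransGen.refl
        (fun h => hres h)
      rw [hcrossF, hcrossIn] at hvalF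
      simp at hvalF
      have hFcard : ¬ F.card ≤ k := by
        intro hcard
        have hreach := hnocut F hcard
        have hSpv : Sp v := by
          have : ∀ {y : ℕ}, Relation.ReflTransGen (fun a b => (a, b) ∈ A \ F) u y → Sp y := by
            intro y hy
            induction hy with
            | refl => exact Relation.ReflTransGen.refl
            | tail h1 h2 ih2 =>
              rename_i b c
              by_contra hSc
              have := Finset.mem_sdiff.1 h2
              exact this.2 (Finset.mem_filter.2 ⟨this.1, ih2, hSc⟩)
          exact this hreach
        exact hres hSpv
      refine ⟨B, hBA, hcons, ?_⟩
      rw [hvalF]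
      push_cast
      omega
lemma arcsOf_eq (p : List ℕ) : Dgraph.arcsOf p = arcsOf p := rfl

lemma family_bound {D : Dgraph} (hWF : D.WF) {u v : ℕ} (huv : u ≠ v) {n : ℕ}
    {P : Fin n → List ℕ} (hP : ∀ i, D.IsDipath (P i) u v)
    (hd : Pairwise fun i j => Disjoint (Dgraph.arcsOf (P i)) (Dgraph.arcsOf (P j))) :
    n ≤ D.arcs.card := by
  have hne : ∀ i, ∃ e, e ∈ arcsOf (P i) := by
    intro i
    obtain ⟨hnd, hh, hl, _, hc⟩ := hP i
    exact (arcsOf_nonempty (two_le_length hh hl huv))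
  choose f hf using hne
  have hfA : ∀ i, f i ∈ D.arcs := by
    intro i
    exact chain'_arcs (hP i).2.2.2.2 _ (hf i)
  have hinj : Set.InjOn f (Finset.univ : Finset (Fin n)) := by
    intro i _ j _ hij
    by_contra hne'
    have h : Disjoint (Dgraph.arcsOf (P i)) (Dgraph.arcsOf (P j)) := hd hne'
    exact (Finset.disjoint_left.1 h) (hf i) (hij ▸ hf j)
  calc n = (Finset.univ : Finset (Fin n)).card := by simp
    _ ≤ D.arcs.card := Finset.card_le_card_of_injOn f (fun i _ => hfA i) hinj

lemma locLam_le_card {D : Dgraph} (hWF : D.WF) {u v : ℕ} (huv : u ≠ v) :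
    D.locLam u v ≤ D.arcs.card := by
  apply csSup_le
  · exact ⟨0, Fin.elim0, fun i => i.elim0, by intro i j h; exact i.elim0⟩
  · rintro n ⟨P, hP, hd⟩
    exact family_bound hWF huv hP hd

lemma le_locLam {D : Dgraph} (hWF : D.WF) {u v : ℕ} (huv : u ≠ v) {n : ℕ}
    {P : Fin n → List ℕ} (hP : ∀ i, D.IsDipath (P i) u v)
    (hd : Pairwise fun i j => Disjoint (Dgraph.arcsOf (P i)) (Dgraph.arcsOf (P j))) :
    n ≤ D.locLam u v := by
  apply le_csSup
  · exact ⟨D.arcs.card, fun m hm => by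
      obtain ⟨P', hP', hd'⟩ := hm
      exact family_bound hWF huv hP' hd'⟩
  · exact ⟨P, hP, hd⟩

lemma locLam_le_lam {D : Dgraph} (hWF : D.WF) {u v : ℕ} (hu : u ∈ D.verts)
    (hv : v ∈ D.verts) (huv : u ≠ v) : D.locLam u v ≤ D.lam := by
  apply le_csSup
  · refine ⟨D.arcs.card, ?_⟩
    rintro n ⟨u', hu', v', hv', huv', rfl⟩
    exact locLam_le_card hWF huv'
  · exact ⟨u, hu, v, hv, huv, rfl⟩

lemma small_cut_exists {D : Dgraph} (hWF : D.WF) {u v : ℕ} {k : ℕ}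
    (hlam : D.lam = k) (hu : u ∈ D.verts) (hv : v ∈ D.verts) (huv : u ≠ v) :
    ∃ F : Finset (ℕ × ℕ), F.card ≤ k ∧
      ¬ Relation.ReflTransGen (fun x y => (x, y) ∈ D.arcs \ F) u v := by
  by_contra hno
  push_neg at hno
  obtain ⟨B, hBA, hcons, hval⟩ := exists_flow huv k hno (k + 1) le_rfl
  obtain ⟨P, hP, hd⟩ := flow_paths huv (k + 1) B hBA hcons hval
  have hdip : ∀ i, D.IsDipath (P i) u v := by
    intro i
    obtain ⟨hnd, hh, hl, hsub⟩ := hP i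
    have hsubA : arcsOf (P i) ⊆ D.arcs := hsub.trans hBA
    refine ⟨hnd, hh, hl, ?_, ?_⟩
    · intro x hx
      obtain ⟨e, he, hex⟩ := every_vertex_on_arc (two_le_length hh hl huv) x hx
      have := hWF e (hsubA he)
      rcases hex with h | h
      · exact h ▸ this.1
      · exact h ▸ this.2.1
    · exact arcs_chain' (fun e he => hsubA he)
  have hd' : Pairwise fun i j => Disjoint (Dgraph.arcsOf (P i)) (Dgraph.arcsOf (P j)) := by
    intro i j hij
    rw [arcsOf_eq, arcsOf_eq]
    exact hd hij
  have h1 := le_locLam hWF huv hdip hd'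
  have h2 := locLam_le_lam hWF hu hv huv
  omega
lemma perm_avoid {k : ℕ} (hk : 1 ≤ k) (Q : Finset (Fin k × Fin k)) (hQ : Q.card ≤ k - 1) :
    ∃ π : Fin k → Fin k, Function.Injective π ∧ ∀ q ∈ Q, π q.2 ≠ q.1 := by
  classical
  set forb : Fin k → Finset (Fin k) :=
    fun b => (Q.filter (fun q => q.2 = b)).image Prod.fst with hforb
  set t : Fin k → Finset (Fin k) := fun b => Finset.univ \ forb b with ht
  have hsum : ∑ b, (forb b).card ≤ k - 1 := by
    have h1 : ∑ b, (forb b).card ≤ ∑ b, (Q.filter (fun q => q.2 = b)).card := by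
      apply Finset.sum_le_sum
      intro b _
      exact Finset.card_image_le
    have h2 : ∑ b, (Q.filter (fun q => q.2 = b)).card = Q.card := by
      rw [Finset.card_eq_sum_card_fiberwise (f := Prod.snd) (t := Finset.univ)
        (fun q _ => Finset.mem_univ _)]
    omega
  have hall : ∀ S : Finset (Fin k), S.card ≤ (S.biUnion t).card := by
    intro S
    rcases S.eq_empty_or_nonempty with rfl | hS
    · simp
    · obtain ⟨b0, hb0S, hmin⟩ := Finset.exists_min_image S (fun b => (forb b).card) hS
      have h1 : S.card * (forb b0).card ≤ ∑ b ∈ S, (forb b).card := by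
        have := Finset.card_nsmul_le_sum S (fun b => (forb b).card) ((forb b0).card)
          (fun b hb => hmin b hb)
        simpa [smul_eq_mul] using this
      have h2 : ∑ b ∈ S, (forb b).card ≤ ∑ b, (forb b).card :=
        Finset.sum_le_sum_of_subset (Finset.subset_univ S)
      have h3 : t b0 ⊆ S.biUnion t := Finset.subset_biUnion_of_mem t hb0S
      have h4 : (t b0).card = k - (forb b0).card := by
        rw [ht]
        rw [Finset.card_sdiff_of_subset (Finset.subset_univ _), Finset.card_univ, Fintype.card_fin]
      have h5 : S.card ≤ k := by
        have := Finset.card_le_univ S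
        simpa [Finset.card_univ, Fintype.card_fin] using this
      have h6 : 1 ≤ S.card := Finset.Nonempty.card_pos hS
      have h7 : S.card ≤ k - (forb b0).card := by
        rcases Nat.eq_zero_or_pos (forb b0).card with hz | hpos
        · omega
        · have hprod : S.card * (forb b0).card ≤ k - 1 := le_trans h1 (le_trans h2 hsum)
          obtain ⟨c, hc⟩ := Nat.exists_eq_add_of_le h6
          obtain ⟨a, ha⟩ := Nat.exists_eq_add_of_le hpos
          rw [hc, ha] at hprod
          have hexp : (1 + c) * (1 + a) = 1 + c + a + c * a := by ring
          rw [hexp] at hprod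
          omega
      calc S.card ≤ k - (forb b0).card := h7
        _ = (t b0).card := h4.symm
        _ ≤ (S.biUnion t).card := Finset.card_le_card h3
  obtain ⟨f, hinj, hf⟩ := (Finset.all_card_le_biUnion_card_iff_exists_injective t).1 hall
  refine ⟨f, hinj, ?_⟩
  intro q hq hfe
  have := hf q.2
  rw [ht] at this
  have hnotin := (Finset.mem_sdiff.1 this).2
  apply hnotin
  rw [hforb]
  exact Finset.mem_image.2 ⟨q, Finset.mem_filter.2 ⟨hq, rfl⟩, hfe.symm⟩
lemma dicycle_del_v {D : Dgraph} {u v : ℕ} {q : List ℕ} (hq : D.IsDicycle q)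
    (hv : v ∉ q) : (D.delArcs {(u, v), (v, u)}).IsDicycle q := by
  obtain ⟨hlen, hnd, hverts, hchain, hwrap⟩ := hq
  refine ⟨hlen, hnd, hverts, ?_, ?_⟩
  · apply chain'_mono_mem hchain
    intro x hx y hy hr
    have hxv : x ≠ v := fun h => hv (h ▸ hx)
    have hyv : y ≠ v := fun h => hv (h ▸ hy)
    simp only [Dgraph.delArcs, Finset.mem_sdiff]
    exact ⟨hr, by simp [Prod.ext_iff, hxv, hyv]⟩
  · intro x y hx hy
    have hxq := mem_of_getLast? hx
    have hyq := mem_of_head? hy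
    have hxv : x ≠ v := fun h => hv (h ▸ hxq)
    have hyv : y ≠ v := fun h => hv (h ▸ hyq)
    simp only [Dgraph.delArcs, Finset.mem_sdiff]
    exact ⟨hwrap x y hx hy, by simp [Prod.ext_iff, hxv, hyv]⟩

lemma dicycle_del_u {D : Dgraph} {u v : ℕ} {q : List ℕ} (hq : D.IsDicycle q)
    (hu : u ∉ q) : (D.delArcs {(u, v), (v, u)}).IsDicycle q := by
  obtain ⟨hlen, hnd, hverts, hchain, hwrap⟩ := hq
  refine ⟨hlen, hnd, hverts, ?_, ?_⟩
  · apply chain'_mono_mem hchain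
    intro x hx y hy hr
    have hxu : x ≠ u := fun h => hu (h ▸ hx)
    have hyu : y ≠ u := fun h => hu (h ▸ hy)
    simp only [Dgraph.delArcs, Finset.mem_sdiff]
    exact ⟨hr, by simp [Prod.ext_iff, hxu, hyu]⟩
  · intro x y hx hy
    have hxq := mem_of_getLast? hx
    have hyq := mem_of_head? hy
    have hxu : x ≠ u := fun h => hu (h ▸ hxq)
    have hyu : y ≠ u := fun h => hu (h ▸ hyq)
    simp only [Dgraph.delArcs, Finset.mem_sdiff]
    exact ⟨hwrap x y hx hy, by simp [Prod.ext_iff, hxu, hyu]⟩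

lemma key {k : ℕ} (hk : 1 ≤ k) {D : Dgraph} (hWF : D.WF) (hext : Extremal k D)
    {u v : ℕ} (huv : (u, v) ∈ D.arcs) (hvu : (v, u) ∈ D.arcs)
    (φ : ℕ → Fin k) (hφ : (D.delArcs {(u, v), (v, u)}).IsDicolouring k φ) :
    ¬∃ p, (D.delArcs {(u, v), (v, u)}).IsDipath p u v ∧ Mono φ p := by
  classical
  rintro ⟨p, hp, c0, hmono⟩
  obtain ⟨hu, hv, hune⟩ := hWF _ huv
  obtain ⟨hbic, hstrong, hchi, hlam⟩ := hext
  obtain ⟨F, hFcard, hFcut⟩ := small_cut_exists hWF hlam hu hv hune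
  set A := D.arcs with hA
  set Xp : ℕ → Prop := fun x =>
    Relation.ReflTransGen (fun a b => (a, b) ∈ A \ F) u x with hXp
  have hXu : Xp u := Relation.ReflTransGen.refl
  have hXv : ¬ Xp v := hFcut
  have hclosure : ∀ x y, (x, y) ∈ A → Xp x → ¬ Xp y → (x, y) ∈ F := by
    intro x y hxy hXx hXy
    by_contra hF
    exact hXy (hXx.tail (Finset.mem_sdiff.2 ⟨hxy, hF⟩))
  set Fc := A.filter (fun e => Xp e.1 ∧ ¬ Xp e.2) with hFc
  have hFcF : Fc ⊆ F := by
    intro e he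
    obtain ⟨heA, h1, h2⟩ := Finset.mem_filter.1 he
    exact hclosure e.1 e.2 heA h1 h2
  have huvFc : (u, v) ∈ Fc := Finset.mem_filter.2 ⟨huv, hXu, hXv⟩
  obtain ⟨hnd, hh, hl, hpverts, hchain⟩ := hp
  have hcu : φ u = c0 := hmono u (mem_of_head? hh)
  have hcv : φ v = c0 := hmono v (mem_of_getLast? hl)
  -- crossing arc of the monochromatic path
  have hchain' : p.Chain' (fun a b =>
      ((a, b) ∈ (D.delArcs {(u, v), (v, u)}).arcs ∧ a ∈ p ∧ b ∈ p)) := by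
    apply chain'_mono_mem hchain
    intro x hx y hy hr
    exact ⟨hr, hx, hy⟩
  obtain ⟨x0, y0, ⟨he0, hx0p, hy0p⟩, hX0, hY0⟩ := lin_cross hchain' hh hl hXu hXv
  have he0A : (x0, y0) ∈ A := (Finset.mem_sdiff.1 he0).1
  have he0Fc : (x0, y0) ∈ Fc := Finset.mem_filter.2 ⟨he0A, hX0, hY0⟩
  have he0ne : (x0, y0) ≠ (u, v) := by
    intro h
    exact (Finset.mem_sdiff.1 he0).2 (by rw [h]; simp)
  have hcx0 : φ x0 = c0 := hmono x0 hx0p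
  have hcy0 : φ y0 = c0 := hmono y0 hy0p
  -- the constraint set
  set Q := Fc.image (fun e => (φ e.1, φ e.2)) with hQ
  have hQcard : Q.card ≤ k - 1 := by
    have hsub : Q ⊆ (Fc.erase (u, v)).image (fun e => (φ e.1, φ e.2)) := by
      intro q' hq'
      obtain ⟨e, he, rfl⟩ := Finset.mem_image.1 hq'
      by_cases heuv : e = (u, v)
      · subst heuv
        apply Finset.mem_image.2
        refine ⟨(x0, y0), Finset.mem_erase.2 ⟨he0ne, he0Fc⟩, ?_⟩
        simp only []
        rw [hcx0, hcy0, hcu, hcv]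
      · exact Finset.mem_image.2 ⟨e, Finset.mem_erase.2 ⟨heuv, he⟩, rfl⟩
    have h1 : Q.card ≤ (Fc.erase (u, v)).card :=
      le_trans (Finset.card_le_card hsub) Finset.card_image_le
    rw [Finset.card_erase_of_mem huvFc] at h1
    have h2 : Fc.card ≤ F.card := Finset.card_le_card hFcF
    omega
  obtain ⟨π, hπinj, hπ⟩ := perm_avoid hk Q hQcard
  set ψ : ℕ → Fin k := fun x => if Xp x then φ x else π (φ x) with hψdef
  have hψ : D.IsDicolouring k ψ := by
    rintro q hq ⟨c, hc⟩
    by_cases hall : ∀ x ∈ q, Xp x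
    · have hvq : v ∉ q := fun h => hXv (hall v h)
      refine hφ q (dicycle_del_v hq hvq) ⟨c, ?_⟩
      intro x hx
      have := hc x hx
      simp only [hψdef] at this
      rwa [if_pos (hall x hx)] at this
    · push_neg at hall
      obtain ⟨b, hbq, hXb⟩ := hall
      by_cases hnone : ∀ x ∈ q, ¬ Xp x
      · have huq : u ∉ q := fun h => hnone u h hXu
        refine hφ q (dicycle_del_u hq huq) ⟨φ b, ?_⟩
        intro x hx
        have h1 := hc x hx
        have h2 := hc b hbq
        simp only [hψdef] at h1 h2
        rw [if_neg (hnone x hx)] at h1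
        rw [if_neg (hnone b hbq)] at h2
        exact hπinj (h1.trans h2.symm)
      · push_neg at hnone
        obtain ⟨a, haq, hXa⟩ := hnone
        obtain ⟨hlen, hqnd, hqverts, hqchain, hqwrap⟩ := hq
        have hqchain' : q.Chain' (fun x y => ((x, y) ∈ A ∧ x ∈ q ∧ y ∈ q)) := by
          apply chain'_mono_mem hqchain
          intro x hx y hy hr
          exact ⟨hr, hx, hy⟩
        have hqwrap' : ∀ x y, q.getLast? = some x → q.head? = some y →
            ((x, y) ∈ A ∧ x ∈ q ∧ y ∈ q) := by
          intro x y hx hy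
          exact ⟨hqwrap x y hx hy, mem_of_getLast? hx, mem_of_head? hy⟩
        obtain ⟨x1, y1, ⟨he1, hx1q, hy1q⟩, hX1, hY1⟩ :=
          cyc_cross hqchain' hqwrap' haq hXa hbq hXb
        have he1Fc : (x1, y1) ∈ Fc := Finset.mem_filter.2 ⟨he1, hX1, hY1⟩
        have hconstraint := hπ (φ x1, φ y1) (Finset.mem_image.2 ⟨(x1, y1), he1Fc, rfl⟩)
        have h1 := hc x1 hx1q
        have h2 := hc y1 hy1q
        simp only [hψdef] at h1 h2
        rw [if_pos hX1] at h1
        rw [if_neg hY1] at h2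
        exact hconstraint (h2.trans h1.symm)
  have hle : D.dichi ≤ k := Nat.sInf_le ⟨ψ, hψ⟩
  omega
end S5aux

/-- Lemma 4.3: if D is k-extremal and [u,v] ⊆ A(D), then no
k-dicolouring of D − [u,v] has a monochromatic uv-dipath or vu-dipath. -/
theorem statement_5 (k : ℕ) (hk : 1 ≤ k) (D : Dgraph) (hWF : D.WF)
    (hext : Extremal k D) (u v : ℕ)
    (huv : (u, v) ∈ D.arcs) (hvu : (v, u) ∈ D.arcs)
    (φ : ℕ → Fin k) (hφ : (D.delArcs {(u, v), (v, u)}).IsDicolouring k φ) :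
    (¬∃ p, (D.delArcs {(u, v), (v, u)}).IsDipath p u v ∧ Mono φ p) ∧
    (¬∃ p, (D.delArcs {(u, v), (v, u)}).IsDipath p v u ∧ Mono φ p) := by
  have hpair : ({(u, v), (v, u)} : Finset (ℕ × ℕ)) = {(v, u), (u, v)} :=
    Finset.pair_comm _ _
  constructor
  · exact S5aux.key hk hWF hext huv hvu φ hφ
  · rw [hpair]
    apply S5aux.key hk hWF hext hvu huv φ
    rw [← hpair]
    exact hφ
end
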